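/- arXiv:0705.3912 — 7 statements merged into one kernel-verified Lean document; each statement's English description precedes it below -/
import Mathlib

section
/- Let R = ℂ⟦x,y⟧ be the ring of formal power series in two variables over ℂ, with maximal ideal m = ⟨x,y⟩. Let f ∈ R be such that jet₃(f) ∈ {x³ − y³, x²y, x³}, and let I = ⟨g,h⟩ be an ideal of R generated by two elements such that dim_ℂ(R/I) ≥ 3 and ⟨∂f/∂x, ∂f/∂y⟩ + m³ ⊆ I. Then either there exist u, v ∈ R with ⟨u,v⟩ = m and I = ⟨u², v²⟩ and jet₃(f) ∈ {x³ − y³, x³}, or there exist u, v ∈ R with ⟨u,v⟩ = m and I = ⟨u, v³⟩ and jet₃(f) ∈ {x²y, x³}. -/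
/-- The formal power series ring `R = ℂ⟦x,y⟧`. -/
noncomputable abbrev R2 : Type := MvPowerSeries (Fin 2) ℂ

/-- The variable `x`. -/
noncomputable def Xv : R2 := MvPowerSeries.X 0

/-- The variable `y`. -/
noncomputable def Yv : R2 := MvPowerSeries.X 1

/-- The maximal ideal `m = ⟨x, y⟩` of `R = ℂ⟦x,y⟧`. -/
noncomputable def mIdeal : Ideal R2 := Ideal.span {Xv, Yv}

/-- The formal partial derivative `∂f/∂xᵢ` of a power series `f ∈ ℂ⟦x,y⟧`. -/
noncomputable def pderiv2 (i : Fin 2) (f : R2) : R2 :=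
  fun d => ((d i : ℂ) + 1) * MvPowerSeries.coeff (d + Finsupp.single i 1) f

/-- `jet₃ f = g` : the terms of `f` of total degree `≤ 3` are given by `g`,
i.e. `f - g ∈ m⁴`. -/
noncomputable def jet3Eq (f g : R2) : Prop := f - g ∈ mIdeal ^ 4


/-!
Since `m³ ⊆ I`, everything happens at the level of 2-jets: in `R/I` the images `X, Y` of `x, y`
kill all cubic monomials and every series equals its 2-jet. The condition on the partial
derivatives puts `x²` into `I`, together with `y²` or `xy` for the first two jets.

The key obstruction is that a two-generated ideal `I` with `dim R/I ≥ 3` cannot contain `m²`: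
either `I = m² = ⟨x², xy, y²⟩`, which needs three generators, or `I` contains an element with a
nonzero linear part and `R/I` is spanned by `1` and a single variable. Multiplying elements of `I`
by `x` and `y` and invoking this obstruction forces linear relations among the 2-jet coefficients of
all elements of `I`, which identify `I` as `⟨x², (y + c x)²⟩` or `⟨x + γ y², y³⟩`. The remaining
candidates `⟨x², xy, y³⟩` and `⟨x², xy², y³⟩` are excluded because an ideal generated by three
pairwise incomparable monomials is not two-generated: the coefficients at these monomials map
`span {g, h}` into the span of two vectors of `ℂ³`.
-/

open MvPowerSeries

theorem rank_le_two_of_span_pair_eq_top {K M : Type*} [Field K] [AddCommGroup M] [Module K M]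
    {a b : M} (h : Submodule.span K {a, b} = ⊤) : Module.rank K M ≤ 2 := by
  classical
  rw [← rank_top, ← h, ← Finset.coe_pair]
  exact (rank_span_finset_le _).trans (by exact_mod_cast Finset.card_le_two)

theorem algebraMap_mul_mem_span {K A : Type*} [Field K] [CommRing A] [Algebra K A] (c : K)
    {s : Set A} {z : A} (hz : z ∈ s) : algebraMap K A c * z ∈ Submodule.span K s :=
  Algebra.smul_def c z ▸ Submodule.smul_mem _ c (Submodule.subset_span hz)

theorem rank_le_two_of_span_triple_eq_top {K A : Type*} [Field K] [CommRing A] [Algebra K A]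
    {y z : A} (htop : Submodule.span K {1, y, z} = ⊤) {c : K} (h : y = algebraMap K A c * z) :
    Module.rank K A ≤ 2 := by
  refine rank_le_two_of_span_pair_eq_top (a := 1) (b := z) (top_le_iff.1 ?_)
  rw [← htop, Submodule.span_le, Set.insert_subset_iff, Set.insert_subset_iff,
    Set.singleton_subset_iff]
  refine ⟨Submodule.subset_span (by simp), ?_, Submodule.subset_span (by simp)⟩
  rw [SetLike.mem_coe, h]
  exact algebraMap_mul_mem_span _ (by simp)

theorem eq_zero_of_algebraMap_mul_eq_zero {K Q : Type*} [Field K] [CommRing Q] [Algebra K Q]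
    {a : K} (ha : a ≠ 0) {z : Q} (h : algebraMap K Q a * z = 0) : z = 0 :=
  ((isUnit_iff_ne_zero.2 ha).map _).mul_right_eq_zero.1 h

namespace MvPowerSeries

theorem order_X {σ R : Type*} [Semiring R] [Nontrivial R] (i : σ) :
    (X i : MvPowerSeries σ R).order = 1 := by
  rw [X, order_monomial_of_ne_zero one_ne_zero, Finsupp.degree_single, Nat.cast_one]

variable {σ K : Type*} [Field K]

theorem coeff_sum_mul_monomial_of_antichain {ι : Type*} [Fintype ι] {e : ι → σ →₀ ℕ}
    (he : ∀ i j, e i ≤ e j → i = j) (u : ι → MvPowerSeries σ K) (j : ι) :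
    coeff (e j) (∑ i, u i * monomial (e i) 1) = constantCoeff (u j) := by
  classical
  rw [map_sum, Finset.sum_eq_single j]
  · rw [coeff_mul_monomial, if_pos le_rfl, tsub_self, mul_one, coeff_zero_eq_constantCoeff_apply]
  · intro i _ hij
    rw [coeff_mul_monomial, if_neg fun hle => hij (he i j hle)]
  · simp

theorem span_monomials_ne_span_pair {e : Fin 3 → σ →₀ ℕ} (he : ∀ i j, e i ≤ e j → i = j)
    (g h : MvPowerSeries σ K) :
    Ideal.span (Set.range fun i => monomial (e i) (1 : K)) ≠ Ideal.span {g, h} := by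
  set J := Ideal.span (Set.range fun i => monomial (e i) (1 : K))
  intro hJ
  let ψ : MvPowerSeries σ K →ₗ[K] Fin 3 → K := LinearMap.pi fun j => coeff (e j)
  -- On `J`, multiplication by `s` acts on the coefficients at the generators as `constantCoeff s`.
  have hψ : ∀ w ∈ J, ∀ s, ψ (s * w) = constantCoeff s • ψ w := by
    intro w hw s
    obtain ⟨u, rfl⟩ := (Submodule.mem_span_range_iff_exists_fun _).1 hw
    simp only [smul_eq_mul, Finset.mul_sum, ← mul_assoc]
    ext j
    simp only [ψ, LinearMap.pi_apply, Pi.smul_apply, smul_eq_mul,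
      coeff_sum_mul_monomial_of_antichain he, map_mul]
  have hmem : ∀ i, Pi.single i 1 ∈ Submodule.span K {ψ g, ψ h} := by
    intro i
    have hi : monomial (e i) (1 : K) ∈ Ideal.span {g, h} := hJ ▸ Ideal.subset_span ⟨i, rfl⟩
    obtain ⟨a, b, hab⟩ := Ideal.mem_span_pair.1 hi
    have hψi : ψ (monomial (e i) 1) = Pi.single i 1 := by
      ext j
      classical
      simp only [ψ, LinearMap.pi_apply, coeff_monomial, Pi.single_apply]
      exact if_congr ⟨fun h => he _ _ h.le, congrArg e⟩ rfl rfl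
    rw [← hψi, ← hab, map_add, hψ g (hJ ▸ Ideal.subset_span (by simp)),
      hψ h (hJ ▸ Ideal.subset_span (by simp))]
    exact Submodule.add_mem _ (Submodule.smul_mem _ _ (Submodule.subset_span (by simp)))
      (Submodule.smul_mem _ _ (Submodule.subset_span (by simp)))
  have htop : Submodule.span K (Set.range ![ψ g, ψ h]) = ⊤ := by
    rw [Matrix.range_cons_cons_empty, eq_top_iff, ← (Pi.basisFun K (Fin 3)).span_eq,
      Submodule.span_le]
    rintro _ ⟨i, rfl⟩
    simpa using hmem i
  simpa using finrank_le_of_span_eq_top htop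

end MvPowerSeries

theorem Xv_mem_mIdeal : Xv ∈ mIdeal := Ideal.subset_span (Set.mem_insert _ _)

theorem Yv_mem_mIdeal : Yv ∈ mIdeal := Ideal.subset_span (Set.mem_insert_of_mem _ rfl)

theorem one_le_order_of_mem_mIdeal {f : R2} (hf : f ∈ mIdeal) : 1 ≤ f.order := by
  have hle : mIdeal ≤ RingHom.ker (constantCoeff : R2 →+* ℂ) := by
    rw [mIdeal, Ideal.span_le]
    rintro _ (rfl | rfl) <;> simp [Xv, Yv]
  exact one_le_order_iff_constCoeff_eq_zero.2 (hle hf)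

theorem le_order_of_mem_mIdeal_pow {k : ℕ} {f : R2} (hf : f ∈ mIdeal ^ k) : ↑k ≤ f.order := by
  induction k generalizing f with
  | zero => simp
  | succ k ih =>
    rw [pow_succ] at hf
    induction hf using Submodule.mul_induction_on' with
    | mem_mul_mem p hp q hq =>
      rw [order_mul, Nat.cast_succ]
      exact add_le_add (ih hp) (one_le_order_of_mem_mIdeal hq)
    | add p _ q _ hp hq => exact le_trans (le_min hp hq) min_order_le_add

theorem exists_eq_X_mul_add_X_mul {k : ℕ} {f : R2} (hf : ↑(k + 1) ≤ f.order) :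
    ∃ g h : R2, f = X 0 * g + X 1 * h ∧ ↑k ≤ g.order ∧ ↑k ≤ h.order := by
  classical
  let fy : R2 := fun d => if d 0 = 0 then coeff d f else 0
  have hfy : ∀ d, coeff d fy = if d 0 = 0 then coeff d f else 0 := fun _ => rfl
  have hord : ∀ {φ : R2}, (∀ d, coeff d φ = 0 ∨ coeff d φ = coeff d f) → ↑(k + 1) ≤ φ.order :=
    fun hφ => le_order fun d hd => (hφ d).elim id fun h => h ▸ coeff_of_lt_order (hd.trans_le hf)
  obtain ⟨g, hg⟩ : X 0 ∣ f - fy := X_dvd_iff.2 fun d hd => by simp [hfy, hd]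
  obtain ⟨h, hh⟩ : X 1 ∣ fy := X_dvd_iff.2 fun d hd => by
    rw [hfy]
    split_ifs with h0
    · have : d = 0 := by ext i; fin_cases i <;> simp [h0, hd]
      exact this ▸ coeff_of_lt_order (lt_of_lt_of_le (by simp) hf)
    · rfl
  have hcancel : ∀ (i : Fin 2) (φ : R2), ((k + 1 : ℕ) : ℕ∞) ≤ (X i * φ).order →
      (k : ℕ∞) ≤ φ.order := fun i φ h => by
    rw [order_mul, order_X, add_comm 1, Nat.cast_succ] at h
    exact (ENat.add_le_add_iff_right ENat.one_ne_top).1 h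
  refine ⟨g, h, by rw [← hg, ← hh, sub_add_cancel], hcancel 0 g ?_, hcancel 1 h ?_⟩
  · rw [← hg]
    exact hord fun d => by by_cases h0 : d 0 = 0 <;> simp [hfy, h0]
  · rw [← hh]
    exact hord fun d => by by_cases h0 : d 0 = 0 <;> simp [hfy, h0]

theorem mem_mIdeal_pow_iff {k : ℕ} {f : R2} : f ∈ mIdeal ^ k ↔ ↑k ≤ f.order := by
  refine ⟨le_order_of_mem_mIdeal_pow, fun hf => ?_⟩
  induction k generalizing f with
  | zero => simp
  | succ k ih =>
    obtain ⟨g, h, rfl, hg, hh⟩ := exists_eq_X_mul_add_X_mul hf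
    rw [pow_succ']
    exact add_mem (Ideal.mul_mem_mul Xv_mem_mIdeal (ih hg)) (Ideal.mul_mem_mul Yv_mem_mIdeal (ih hh))

theorem Xv_pow_mul_Yv_pow (i j : ℕ) :
    Xv ^ i * Yv ^ j = monomial (Finsupp.single 0 i + Finsupp.single 1 j) (1 : ℂ) := by
  rw [Xv, Yv, X_pow_eq, X_pow_eq, monomial_mul_monomial, one_mul]

theorem Xv_pow_mul_Yv_pow_mem (i j : ℕ) : Xv ^ i * Yv ^ j ∈ mIdeal ^ (i + j) := by
  rw [pow_add]
  exact Ideal.mul_mem_mul (Ideal.pow_mem_pow Xv_mem_mIdeal i) (Ideal.pow_mem_pow Yv_mem_mIdeal j)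

theorem mIdeal_sq_eq : mIdeal ^ 2 = Ideal.span {Xv ^ 2, Xv * Yv, Yv ^ 2} := by
  refine le_antisymm ?_ ?_
  · rw [sq, mIdeal, Ideal.span_mul_span', Ideal.span_le]
    rintro _ ⟨a, ha, b, hb, rfl⟩
    rcases ha with rfl | rfl <;> rcases hb with rfl | rfl <;> dsimp only
    · exact Ideal.subset_span (by simp [sq])
    · exact Ideal.subset_span (by simp)
    · exact Ideal.subset_span (by simp [mul_comm])
    · exact Ideal.subset_span (by simp [sq])
  · rw [Ideal.span_le]
    rintro _ (rfl | rfl | rfl)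
    · simpa using Xv_pow_mul_Yv_pow_mem 2 0
    · simpa using Xv_pow_mul_Yv_pow_mem 1 1
    · simpa using Xv_pow_mul_Yv_pow_mem 0 2

theorem mIdeal_pow_three_le {J : Ideal R2} (h30 : Xv ^ 3 ∈ J) (h21 : Xv ^ 2 * Yv ∈ J)
    (h12 : Xv * Yv ^ 2 ∈ J) (h03 : Yv ^ 3 ∈ J) : mIdeal ^ 3 ≤ J := by
  rw [pow_three', mIdeal, Ideal.span_mul_span', Ideal.span_mul_span', Ideal.span_le]
  rintro _ ⟨_, ⟨a, ha, b, hb, rfl⟩, c, hc, rfl⟩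
  rcases ha with rfl | rfl <;> rcases hb with rfl | rfl <;> rcases hc with rfl | rfl <;>
    simp only [SetLike.mem_coe] <;>
    first
    | (convert h30 using 1; ring1)
    | (convert h21 using 1; ring1)
    | (convert h12 using 1; ring1)
    | (convert h03 using 1; ring1)

theorem mIdeal_sq_le_iff {J : Ideal R2} :
    mIdeal ^ 2 ≤ J ↔ Ideal.Quotient.mk J Xv ^ 2 = 0 ∧
      Ideal.Quotient.mk J Xv * Ideal.Quotient.mk J Yv = 0 ∧ Ideal.Quotient.mk J Yv ^ 2 = 0 := by
  simp only [mIdeal_sq_eq, Ideal.span_le, Set.insert_subset_iff, Set.singleton_subset_iff,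
    SetLike.mem_coe, ← Ideal.Quotient.eq_zero_iff_mem, map_pow, map_mul]

theorem mIdeal_pow_three_le_iff {J : Ideal R2} :
    mIdeal ^ 3 ≤ J ↔ Ideal.Quotient.mk J Xv ^ 3 = 0 ∧
      Ideal.Quotient.mk J Xv ^ 2 * Ideal.Quotient.mk J Yv = 0 ∧
      Ideal.Quotient.mk J Xv * Ideal.Quotient.mk J Yv ^ 2 = 0 ∧ Ideal.Quotient.mk J Yv ^ 3 = 0 := by
  simp only [← map_pow, ← map_mul, Ideal.Quotient.eq_zero_iff_mem]
  refine ⟨fun h => ⟨h ?_, h ?_, h ?_, h ?_⟩,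
    fun ⟨h30, h21, h12, h03⟩ => mIdeal_pow_three_le h30 h21 h12 h03⟩
  · simpa using Xv_pow_mul_Yv_pow_mem 3 0
  · simpa using Xv_pow_mul_Yv_pow_mem 2 1
  · simpa using Xv_pow_mul_Yv_pow_mem 1 2
  · simpa using Xv_pow_mul_Yv_pow_mem 0 3

theorem span_three_monomials_ne_span_pair {a b : Fin 3 → ℕ}
    (hab : ∀ i j, a i ≤ a j → b i ≤ b j → i = j) (g h : R2) :
    Ideal.span {Xv ^ a 0 * Yv ^ b 0, Xv ^ a 1 * Yv ^ b 1, Xv ^ a 2 * Yv ^ b 2} ≠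
      Ideal.span {g, h} := by
  have he : ∀ i j, Finsupp.single 0 (a i) + Finsupp.single 1 (b i) ≤
      Finsupp.single (0 : Fin 2) (a j) + Finsupp.single 1 (b j) → i = j := fun i j hle =>
    hab i j (by simpa using hle 0) (by simpa using hle 1)
  convert span_monomials_ne_span_pair he g h using 2
  simp [Set.range, Fin.exists_fin_succ, Xv_pow_mul_Yv_pow, Set.ext_iff, eq_comm]

noncomputable def coeffXY (i j : ℕ) : R2 →ₗ[ℂ] ℂ := coeff (Finsupp.single 0 i + Finsupp.single 1 j)

-- Every monomial is written as `xⁱ yʲ` so that `Xv_pow_mul_Yv_pow` reads off its coefficients.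
theorem sub_twoJet_mem (w : R2) :
    w - (coeffXY 0 0 w • (Xv ^ 0 * Yv ^ 0) + coeffXY 1 0 w • (Xv ^ 1 * Yv ^ 0) +
      coeffXY 0 1 w • (Xv ^ 0 * Yv ^ 1) + coeffXY 2 0 w • (Xv ^ 2 * Yv ^ 0) +
      coeffXY 1 1 w • (Xv ^ 1 * Yv ^ 1) + coeffXY 0 2 w • (Xv ^ 0 * Yv ^ 2)) ∈ mIdeal ^ 3 := by
  classical
  rw [mem_mIdeal_pow_iff]
  refine le_order fun d hd => ?_
  obtain ⟨a, b, rfl⟩ : ∃ a b, d = Finsupp.single 0 a + Finsupp.single 1 b :=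
    ⟨d 0, d 1, by ext i; fin_cases i <;> simp⟩
  have hab : a + b < 3 := by
    rw [map_add, Finsupp.degree_single, Finsupp.degree_single] at hd
    exact_mod_cast hd
  simp only [Xv_pow_mul_Yv_pow, map_sub, map_add, map_smul, coeff_monomial, coeffXY,
    smul_eq_mul]
  have ha : a < 3 := by omega
  have hb : b < 3 := by omega
  interval_cases a <;> interval_cases b <;>
    first | omega | simp [Finsupp.ext_iff, Fin.forall_fin_two]

theorem mk_eq_twoJet {J : Ideal R2} (hJ : mIdeal ^ 3 ≤ J) (w : R2) :
    Ideal.Quotient.mk J w = algebraMap ℂ _ (coeffXY 0 0 w) +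
      algebraMap ℂ _ (coeffXY 1 0 w) * Ideal.Quotient.mk J Xv +
      algebraMap ℂ _ (coeffXY 0 1 w) * Ideal.Quotient.mk J Yv +
      algebraMap ℂ _ (coeffXY 2 0 w) * Ideal.Quotient.mk J Xv ^ 2 +
      algebraMap ℂ _ (coeffXY 1 1 w) * (Ideal.Quotient.mk J Xv * Ideal.Quotient.mk J Yv) +
      algebraMap ℂ _ (coeffXY 0 2 w) * Ideal.Quotient.mk J Yv ^ 2 := by
  have h := Ideal.Quotient.eq_zero_iff_mem.2 (hJ (sub_twoJet_mem w))
  simp only [map_sub, sub_eq_zero, map_add, Algebra.smul_def, map_mul, map_pow,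
    Ideal.Quotient.mk_algebraMap, pow_zero, pow_one, mul_one, one_mul] at h
  exact h

theorem ne_top_of_three_le_rank {I : Ideal R2} (hdim : (3 : Cardinal) ≤ Module.rank ℂ (R2 ⧸ I)) :
    I ≠ ⊤ := by
  rintro rfl
  simp at hdim

theorem coeffXY_zero_zero_eq_zero {I : Ideal R2} (hI : I ≠ ⊤) {w : R2} (hw : w ∈ I) :
    coeffXY 0 0 w = 0 := by
  by_contra h
  refine hI (Ideal.eq_top_of_isUnit_mem _ hw (isUnit_iff_constantCoeff.2 ?_))
  simpa [coeffXY, coeff_zero_eq_constantCoeff_apply] using h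

theorem twoJet_eq_zero_of_mem {I : Ideal R2} (hI : I ≠ ⊤) (hm3 : mIdeal ^ 3 ≤ I) {w : R2}
    (hw : w ∈ I) :
    algebraMap ℂ _ (coeffXY 1 0 w) * Ideal.Quotient.mk I Xv +
      algebraMap ℂ _ (coeffXY 0 1 w) * Ideal.Quotient.mk I Yv +
      algebraMap ℂ _ (coeffXY 2 0 w) * Ideal.Quotient.mk I Xv ^ 2 +
      algebraMap ℂ _ (coeffXY 1 1 w) * (Ideal.Quotient.mk I Xv * Ideal.Quotient.mk I Yv) +
      algebraMap ℂ _ (coeffXY 0 2 w) * Ideal.Quotient.mk I Yv ^ 2 = 0 := by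
  have h := mk_eq_twoJet hm3 w
  rw [Ideal.Quotient.eq_zero_iff_mem.2 hw, coeffXY_zero_zero_eq_zero hI hw, map_zero,
    zero_add] at h
  exact h.symm

theorem mem_span_add_smul_sq_cube {γ : ℂ} {w : R2} (h00 : coeffXY 0 0 w = 0)
    (h01 : coeffXY 0 1 w = 0) (h02 : coeffXY 0 2 w = coeffXY 1 0 w * γ) :
    w ∈ Ideal.span {Xv + γ • Yv ^ 2, Yv ^ 3} := by
  set J := Ideal.span {Xv + γ • Yv ^ 2, Yv ^ 3}
  have hU : Ideal.Quotient.mk J Xv + algebraMap ℂ _ γ * Ideal.Quotient.mk J Yv ^ 2 = 0 := by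
    simpa [Algebra.smul_def] using
      Ideal.Quotient.eq_zero_iff_mem.2 (Ideal.subset_span (Set.mem_insert _ _) :
        Xv + γ • Yv ^ 2 ∈ J)
  have hY3 : Ideal.Quotient.mk J Yv ^ 3 = 0 := by
    simpa using Ideal.Quotient.eq_zero_iff_mem.2 (Ideal.subset_span (Set.mem_insert_of_mem _ rfl) :
        Yv ^ 3 ∈ J)
  set A := algebraMap ℂ (R2 ⧸ J)
  set X := Ideal.Quotient.mk J Xv
  set Y := Ideal.Quotient.mk J Yv
  have hXY : X * Y = 0 := by linear_combination Y * hU - A γ * hY3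
  have hX2 : X ^ 2 = 0 := by linear_combination X * hU - A γ * Y * hXY
  have hm3 : mIdeal ^ 3 ≤ J := mIdeal_pow_three_le_iff.2
    ⟨by linear_combination X * hX2, by linear_combination Y * hX2,
      by linear_combination Y * hXY, hY3⟩
  rw [← Ideal.Quotient.eq_zero_iff_mem, mk_eq_twoJet hm3, h00, h01, h02, map_mul, map_zero]
  linear_combination A (coeffXY 1 0 w) * hU + A (coeffXY 2 0 w) * hX2 + A (coeffXY 1 1 w) * hXY

theorem mem_span_sq_add_smul_sq {c : ℂ} {w : R2} (h00 : coeffXY 0 0 w = 0)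
    (h10 : coeffXY 1 0 w = 0) (h01 : coeffXY 0 1 w = 0)
    (h11 : coeffXY 1 1 w = 2 * c * coeffXY 0 2 w) :
    w ∈ Ideal.span {Xv ^ 2, (Yv + c • Xv) ^ 2} := by
  set J := Ideal.span {Xv ^ 2, (Yv + c • Xv) ^ 2}
  have hX2 : Ideal.Quotient.mk J Xv ^ 2 = 0 := by
    simpa using Ideal.Quotient.eq_zero_iff_mem.2 (Ideal.subset_span (Set.mem_insert _ _) :
        Xv ^ 2 ∈ J)
  have hV : (Ideal.Quotient.mk J Yv + algebraMap ℂ _ c * Ideal.Quotient.mk J Xv) ^ 2 = 0 := by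
    simpa [Algebra.smul_def] using
      Ideal.Quotient.eq_zero_iff_mem.2 (Ideal.subset_span (Set.mem_insert_of_mem _ rfl) :
        (Yv + c • Xv) ^ 2 ∈ J)
  set A := algebraMap ℂ (R2 ⧸ J)
  set X := Ideal.Quotient.mk J Xv
  set Y := Ideal.Quotient.mk J Yv
  have hY2 : Y ^ 2 = -(2 * A c * (X * Y)) := by linear_combination hV - A c ^ 2 * hX2
  have hXY2 : X * Y ^ 2 = 0 := by linear_combination X * hY2 - 2 * A c * Y * hX2
  have hm3 : mIdeal ^ 3 ≤ J := mIdeal_pow_three_le_iff.2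
    ⟨by linear_combination X * hX2, by linear_combination Y * hX2, hXY2,
      by linear_combination Y * hY2 - 2 * A c * hXY2⟩
  rw [← Ideal.Quotient.eq_zero_iff_mem, mk_eq_twoJet hm3, h00, h10, h01, h11, map_mul, map_mul,
    map_ofNat, map_zero]
  linear_combination A (coeffXY 2 0 w) * hX2 + A (coeffXY 0 2 w) * hY2

theorem mem_span_sq_mul_cube {w : R2} (h00 : coeffXY 0 0 w = 0) (h10 : coeffXY 1 0 w = 0)
    (h01 : coeffXY 0 1 w = 0) (h02 : coeffXY 0 2 w = 0) :
    w ∈ Ideal.span {Xv ^ 2, Xv * Yv, Yv ^ 3} := by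
  set J := Ideal.span {Xv ^ 2, Xv * Yv, Yv ^ 3}
  have hmk : ∀ z ∈ ({Xv ^ 2, Xv * Yv, Yv ^ 3} : Set R2), Ideal.Quotient.mk J z = 0 :=
    fun z hz => Ideal.Quotient.eq_zero_iff_mem.2 (Ideal.subset_span hz)
  have hX2 : Ideal.Quotient.mk J Xv ^ 2 = 0 := by rw [← map_pow]; exact hmk _ (by simp)
  have hXY : Ideal.Quotient.mk J Xv * Ideal.Quotient.mk J Yv = 0 := by
    rw [← map_mul]; exact hmk _ (by simp)
  have hY3 : Ideal.Quotient.mk J Yv ^ 3 = 0 := by rw [← map_pow]; exact hmk _ (by simp)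
  have hm3 : mIdeal ^ 3 ≤ J := mIdeal_pow_three_le_iff.2
    ⟨by linear_combination Ideal.Quotient.mk J Xv * hX2,
      by linear_combination Ideal.Quotient.mk J Yv * hX2,
      by linear_combination Ideal.Quotient.mk J Yv * hXY, hY3⟩
  rw [← Ideal.Quotient.eq_zero_iff_mem, mk_eq_twoJet hm3, h00, h10, h01, h02, map_zero]
  linear_combination algebraMap ℂ _ (coeffXY 2 0 w) * hX2 + algebraMap ℂ _ (coeffXY 1 1 w) * hXY

theorem mem_span_sq_mul_sq_cube {w : R2} (h00 : coeffXY 0 0 w = 0) (h10 : coeffXY 1 0 w = 0)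
    (h01 : coeffXY 0 1 w = 0) (h11 : coeffXY 1 1 w = 0) (h02 : coeffXY 0 2 w = 0) :
    w ∈ Ideal.span {Xv ^ 2, Xv * Yv ^ 2, Yv ^ 3} := by
  set J := Ideal.span {Xv ^ 2, Xv * Yv ^ 2, Yv ^ 3}
  have hmk : ∀ z ∈ ({Xv ^ 2, Xv * Yv ^ 2, Yv ^ 3} : Set R2), Ideal.Quotient.mk J z = 0 :=
    fun z hz => Ideal.Quotient.eq_zero_iff_mem.2 (Ideal.subset_span hz)
  have hX2 : Ideal.Quotient.mk J Xv ^ 2 = 0 := by rw [← map_pow]; exact hmk _ (by simp)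
  have hXY2 : Ideal.Quotient.mk J Xv * Ideal.Quotient.mk J Yv ^ 2 = 0 := by
    rw [← map_pow, ← map_mul]; exact hmk _ (by simp)
  have hY3 : Ideal.Quotient.mk J Yv ^ 3 = 0 := by rw [← map_pow]; exact hmk _ (by simp)
  have hm3 : mIdeal ^ 3 ≤ J := mIdeal_pow_three_le_iff.2
    ⟨by linear_combination Ideal.Quotient.mk J Xv * hX2,
      by linear_combination Ideal.Quotient.mk J Yv * hX2, hXY2, hY3⟩
  rw [← Ideal.Quotient.eq_zero_iff_mem, mk_eq_twoJet hm3, h00, h10, h01, h11, h02, map_zero]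
  linear_combination algebraMap ℂ _ (coeffXY 2 0 w) * hX2

theorem span_Xv_Yv_add_smul_Xv (c : ℂ) : Ideal.span {Xv, Yv + c • Xv} = mIdeal := by
  rw [Algebra.smul_def, Ideal.span_pair_add_mul_left, mIdeal]

theorem span_Xv_add_smul_sq_Yv (γ : ℂ) : Ideal.span {Xv + γ • Yv ^ 2, Yv} = mIdeal := by
  rw [Algebra.smul_def, sq, ← mul_assoc, Ideal.span_pair_add_mul_right, mIdeal]

theorem span_one_mk_Xv_mk_Yv_eq_top {I : Ideal R2} (hm2 : mIdeal ^ 2 ≤ I) :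
    Submodule.span ℂ {1, Ideal.Quotient.mk I Xv, Ideal.Quotient.mk I Yv} = ⊤ := by
  obtain ⟨hX2, hXY, hY2⟩ := mIdeal_sq_le_iff.1 hm2
  refine eq_top_iff.2 fun z _ => ?_
  obtain ⟨r, rfl⟩ := Ideal.Quotient.mk_surjective z
  have hr : Ideal.Quotient.mk I r = algebraMap ℂ _ (coeffXY 0 0 r) * 1 +
      algebraMap ℂ _ (coeffXY 1 0 r) * Ideal.Quotient.mk I Xv +
      algebraMap ℂ _ (coeffXY 0 1 r) * Ideal.Quotient.mk I Yv := by
    linear_combination mk_eq_twoJet ((Ideal.pow_le_pow_right (by norm_num)).trans hm2) r +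
      algebraMap ℂ _ (coeffXY 2 0 r) * hX2 + algebraMap ℂ _ (coeffXY 1 1 r) * hXY +
      algebraMap ℂ _ (coeffXY 0 2 r) * hY2
  rw [hr]
  refine add_mem (add_mem ?_ ?_) ?_ <;> exact algebraMap_mul_mem_span _ (by simp)

theorem coeffXY_linear_ne_zero_of_not_mem {w : R2} (hw : w ∉ mIdeal ^ 2)
    (h00 : coeffXY 0 0 w = 0) : coeffXY 1 0 w ≠ 0 ∨ coeffXY 0 1 w ≠ 0 := by
  by_contra! h
  obtain ⟨hX2, hXY, hY2⟩ := mIdeal_sq_le_iff.1 (le_refl (mIdeal ^ 2))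
  refine hw (Ideal.Quotient.eq_zero_iff_mem.1 ?_)
  rw [mk_eq_twoJet (Ideal.pow_le_pow_right (by norm_num)), h00, h.1, h.2, hX2, hXY, hY2]
  simp only [map_zero, zero_mul, mul_zero, add_zero]

theorem rank_quotient_le_two {I : Ideal R2} (hI : I ≠ ⊤) (hm2 : mIdeal ^ 2 ≤ I)
    (hIm2 : ¬I ≤ mIdeal ^ 2) : Module.rank ℂ (R2 ⧸ I) ≤ 2 := by
  obtain ⟨w, hwI, hwm2⟩ := Set.not_subset.1 hIm2
  have h00 := coeffXY_zero_zero_eq_zero hI hwI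
  obtain ⟨hX2, hXY, hY2⟩ := mIdeal_sq_le_iff.1 hm2
  have htop := span_one_mk_Xv_mk_Yv_eq_top hm2
  have hrel := twoJet_eq_zero_of_mem hI ((Ideal.pow_le_pow_right (by norm_num)).trans hm2) hwI
  set X := Ideal.Quotient.mk I Xv
  set Y := Ideal.Quotient.mk I Yv
  set A := algebraMap ℂ (R2 ⧸ I)
  -- the linear part of `w` makes one of `X`, `Y` a multiple of the other
  have hdiv : ∀ {a b : ℂ}, a ≠ 0 → A a * A (-(b / a)) = -A b := fun ha => by
    rw [← map_mul, ← map_neg, mul_neg, mul_div_cancel₀ _ ha]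
  rcases coeffXY_linear_ne_zero_of_not_mem hwm2 h00 with h | h
  · refine rank_le_two_of_span_triple_eq_top htop (c := -(coeffXY 0 1 w / coeffXY 1 0 w)) ?_
    refine sub_eq_zero.1 (eq_zero_of_algebraMap_mul_eq_zero h ?_)
    linear_combination hrel - Y * hdiv (b := coeffXY 0 1 w) h -
      A (coeffXY 2 0 w) * hX2 - A (coeffXY 1 1 w) * hXY - A (coeffXY 0 2 w) * hY2
  · rw [Set.pair_comm X Y] at htop
    refine rank_le_two_of_span_triple_eq_top htop (c := -(coeffXY 1 0 w / coeffXY 0 1 w)) ?_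
    refine sub_eq_zero.1 (eq_zero_of_algebraMap_mul_eq_zero h ?_)
    linear_combination hrel - X * hdiv (b := coeffXY 1 0 w) h -
      A (coeffXY 2 0 w) * hX2 - A (coeffXY 1 1 w) * hXY - A (coeffXY 0 2 w) * hY2

theorem not_mIdeal_sq_le {I : Ideal R2} {g h : R2}
    (hdim : (3 : Cardinal) ≤ Module.rank ℂ (R2 ⧸ I)) (hI : I = Ideal.span {g, h}) :
    ¬mIdeal ^ 2 ≤ I := by
  intro hm2
  by_cases hle : I ≤ mIdeal ^ 2
  · refine span_three_monomials_ne_span_pair (a := ![2, 1, 0]) (b := ![0, 1, 2]) (by decide) g h ?_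
    simpa [← mIdeal_sq_eq, ← hI] using (le_antisymm hle hm2).symm
  · have := hdim.trans (rank_quotient_le_two (ne_top_of_three_le_rank hdim) hm2 hle)
    norm_num at this

section TwoGenerated

variable {I : Ideal R2} {g h : R2}

theorem coeffXY_zero_one_eq_zero (hdim : (3 : Cardinal) ≤ Module.rank ℂ (R2 ⧸ I))
    (hI : I = Ideal.span {g, h}) (hm3 : mIdeal ^ 3 ≤ I) (hx2 : Xv ^ 2 ∈ I) {w : R2}
    (hw : w ∈ I) : coeffXY 0 1 w = 0 := by
  by_contra ha
  have hX2 : Ideal.Quotient.mk I Xv ^ 2 = 0 := by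
    simpa using Ideal.Quotient.eq_zero_iff_mem.2 hx2
  have hjet := twoJet_eq_zero_of_mem (ne_top_of_three_le_rank hdim) hm3 hw
  obtain ⟨h30, h21, h12, h03⟩ := mIdeal_pow_three_le_iff.1 hm3
  set A := algebraMap ℂ (R2 ⧸ I)
  set X := Ideal.Quotient.mk I Xv
  set Y := Ideal.Quotient.mk I Yv
  -- multiplying the relation of `w` by `x` and by `y` kills `xy` and `y²`
  have hXY : X * Y = 0 := eq_zero_of_algebraMap_mul_eq_zero ha <| by
    linear_combination X * hjet - A (coeffXY 1 0 w) * hX2 - A (coeffXY 2 0 w) * h30 -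
      A (coeffXY 1 1 w) * h21 - A (coeffXY 0 2 w) * h12
  have hY2 : Y ^ 2 = 0 := eq_zero_of_algebraMap_mul_eq_zero ha <| by
    linear_combination Y * hjet - A (coeffXY 1 0 w) * hXY - A (coeffXY 2 0 w) * h21 -
      A (coeffXY 1 1 w) * h12 - A (coeffXY 0 2 w) * h03
  exact not_mIdeal_sq_le hdim hI (mIdeal_sq_le_iff.2 ⟨hX2, hXY, hY2⟩)

theorem exists_coeffXY_zero_two_ne_zero (hdim : (3 : Cardinal) ≤ Module.rank ℂ (R2 ⧸ I))
    (hI : I = Ideal.span {g, h}) (hm3 : mIdeal ^ 3 ≤ I) (hx2 : Xv ^ 2 ∈ I)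
    (h10 : ∀ w ∈ I, coeffXY 1 0 w = 0) : ∃ w ∈ I, coeffXY 0 2 w ≠ 0 := by
  by_contra! h02
  have hI' := ne_top_of_three_le_rank hdim
  have h00 := fun w (hw : w ∈ I) => coeffXY_zero_zero_eq_zero hI' hw
  have h01 := fun w (hw : w ∈ I) => coeffXY_zero_one_eq_zero hdim hI hm3 hx2 hw
  have hy3 : Yv ^ 3 ∈ I := hm3 (by simpa using Xv_pow_mul_Yv_pow_mem 0 3)
  -- otherwise `I` is one of the monomial ideals `⟨x², xy, y³⟩`, `⟨x², xy², y³⟩`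
  by_cases hxy : Xv * Yv ∈ I
  · have hK : I = Ideal.span {Xv ^ 2, Xv * Yv, Yv ^ 3} := by
      refine le_antisymm (fun w hw => ?_) ?_
      · exact mem_span_sq_mul_cube (h00 w hw) (h10 w hw) (h01 w hw) (h02 w hw)
      · rw [Ideal.span_le, Set.insert_subset_iff, Set.insert_subset_iff, Set.singleton_subset_iff]
        exact ⟨hx2, hxy, hy3⟩
    refine span_three_monomials_ne_span_pair (a := ![2, 1, 0]) (b := ![0, 1, 3]) (by decide) g h ?_
    simpa [← hK] using hI
  · have h11 : ∀ w ∈ I, coeffXY 1 1 w = 0 := by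
      intro w hw
      by_contra ha
      have hjet := twoJet_eq_zero_of_mem hI' hm3 hw
      simp only [h10 w hw, h01 w hw, h02 w hw, map_zero, zero_mul, add_zero, zero_add] at hjet
      have hX2 : Ideal.Quotient.mk I Xv ^ 2 = 0 := by
        rw [← map_pow, Ideal.Quotient.eq_zero_iff_mem]
        exact hx2
      refine hxy (Ideal.Quotient.eq_zero_iff_mem.1 ?_)
      rw [map_mul]
      refine eq_zero_of_algebraMap_mul_eq_zero ha ?_
      linear_combination hjet - algebraMap ℂ _ (coeffXY 2 0 w) * hX2
    have hK : I = Ideal.span {Xv ^ 2, Xv * Yv ^ 2, Yv ^ 3} := by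
      refine le_antisymm (fun w hw => ?_) ?_
      · exact mem_span_sq_mul_sq_cube (h00 w hw) (h10 w hw) (h01 w hw) (h11 w hw) (h02 w hw)
      · rw [Ideal.span_le, Set.insert_subset_iff, Set.insert_subset_iff, Set.singleton_subset_iff]
        exact ⟨hx2, hm3 (by simpa using Xv_pow_mul_Yv_pow_mem 1 2), hy3⟩
    refine span_three_monomials_ne_span_pair (a := ![2, 1, 0]) (b := ![0, 2, 3]) (by decide) g h ?_
    simpa [← hK] using hI

theorem exists_eq_span_sq_add_smul_sq (hdim : (3 : Cardinal) ≤ Module.rank ℂ (R2 ⧸ I))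
    (hI : I = Ideal.span {g, h}) (hm3 : mIdeal ^ 3 ≤ I) (hx2 : Xv ^ 2 ∈ I)
    (h10 : ∀ w ∈ I, coeffXY 1 0 w = 0) :
    ∃ c : ℂ, I = Ideal.span {Xv ^ 2, (Yv + c • Xv) ^ 2} := by
  have hI' := ne_top_of_three_le_rank hdim
  have h01 := fun w (hw : w ∈ I) => coeffXY_zero_one_eq_zero hdim hI hm3 hx2 hw
  have hjet : ∀ w ∈ I, _ := fun w hw => by
    have h := twoJet_eq_zero_of_mem hI' hm3 hw
    simp only [h10 w hw, h01 w hw, map_zero, zero_mul, zero_add] at h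
    exact h
  obtain ⟨w, hw, ha⟩ := exists_coeffXY_zero_two_ne_zero hdim hI hm3 hx2 h10
  have hX2 : Ideal.Quotient.mk I Xv ^ 2 = 0 := by
    rw [← map_pow, Ideal.Quotient.eq_zero_iff_mem]
    exact hx2
  set c := coeffXY 1 1 w / (2 * coeffXY 0 2 w) with hcdef
  set A := algebraMap ℂ (R2 ⧸ I)
  set X := Ideal.Quotient.mk I Xv
  set Y := Ideal.Quotient.mk I Yv
  have hc : A (coeffXY 0 2 w) * (2 * A c) = A (coeffXY 1 1 w) := by
    rw [← map_ofNat A, ← map_mul, ← map_mul, hcdef]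
    field_simp
  have hV : (Y + A c * X) ^ 2 = 0 := eq_zero_of_algebraMap_mul_eq_zero ha <| by
    linear_combination hjet w hw + (A (coeffXY 0 2 w) * A c ^ 2 - A (coeffXY 2 0 w)) * hX2 +
      X * Y * hc
  -- every element of `I` satisfies the linear condition cut out by `(y + c x)²`
  have hkey : ∀ w' ∈ I, coeffXY 1 1 w' = 2 * c * coeffXY 0 2 w' := by
    intro w' hw'
    by_contra hne
    have hXY : X * Y = 0 := eq_zero_of_algebraMap_mul_eq_zero (sub_ne_zero.2 hne) <| by
      rw [map_sub, map_mul, map_mul, map_ofNat]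
      linear_combination hjet w' hw' - A (coeffXY 0 2 w') * hV +
        (A (coeffXY 0 2 w') * A c ^ 2 - A (coeffXY 2 0 w')) * hX2
    have hY2 : Y ^ 2 = 0 := by linear_combination hV - 2 * A c * hXY - A c ^ 2 * hX2
    exact not_mIdeal_sq_le hdim hI (mIdeal_sq_le_iff.2 ⟨hX2, hXY, hY2⟩)
  refine ⟨c, le_antisymm (fun w' hw' => ?_) ?_⟩
  · exact mem_span_sq_add_smul_sq (coeffXY_zero_zero_eq_zero hI' hw') (h10 w' hw') (h01 w' hw')
      (hkey w' hw')
  · rw [Ideal.span_le, Set.insert_subset_iff, Set.singleton_subset_iff]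
    refine ⟨hx2, Ideal.Quotient.eq_zero_iff_mem.1 ?_⟩
    simpa [Algebra.smul_def] using hV

theorem exists_eq_span_add_smul_sq_cube (hdim : (3 : Cardinal) ≤ Module.rank ℂ (R2 ⧸ I))
    (hI : I = Ideal.span {g, h}) (hm3 : mIdeal ^ 3 ≤ I) (hx2 : Xv ^ 2 ∈ I) {w : R2}
    (hw : w ∈ I) (ha : coeffXY 1 0 w ≠ 0) :
    ∃ γ : ℂ, I = Ideal.span {Xv + γ • Yv ^ 2, Yv ^ 3} := by
  have hI' := ne_top_of_three_le_rank hdim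
  have h01 := fun w (hw : w ∈ I) => coeffXY_zero_one_eq_zero hdim hI hm3 hx2 hw
  have hjet : ∀ w ∈ I, _ := fun w hw => by
    have h := twoJet_eq_zero_of_mem hI' hm3 hw
    simp only [h01 w hw, map_zero, zero_mul, add_zero] at h
    exact h
  have hX2 : Ideal.Quotient.mk I Xv ^ 2 = 0 := by
    rw [← map_pow, Ideal.Quotient.eq_zero_iff_mem]
    exact hx2
  obtain ⟨h30, h21, h12, h03⟩ := mIdeal_pow_three_le_iff.1 hm3
  set γ := coeffXY 0 2 w / coeffXY 1 0 w
  set A := algebraMap ℂ (R2 ⧸ I)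
  set X := Ideal.Quotient.mk I Xv
  set Y := Ideal.Quotient.mk I Yv
  have hγ : A (coeffXY 1 0 w) * A γ = A (coeffXY 0 2 w) := by
    rw [← map_mul, mul_div_cancel₀ _ ha]
  have hXY : X * Y = 0 := eq_zero_of_algebraMap_mul_eq_zero ha <| by
    linear_combination Y * hjet w hw - A (coeffXY 2 0 w) * h21 - A (coeffXY 1 1 w) * h12 -
      A (coeffXY 0 2 w) * h03
  have hU : X + A γ * Y ^ 2 = 0 := eq_zero_of_algebraMap_mul_eq_zero ha <| by
    linear_combination hjet w hw - A (coeffXY 2 0 w) * hX2 - A (coeffXY 1 1 w) * hXY +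
      Y ^ 2 * hγ
  -- every element of `I` satisfies the linear condition cut out by `x + γ y²`
  have hkey : ∀ w' ∈ I, coeffXY 0 2 w' = coeffXY 1 0 w' * γ := by
    intro w' hw'
    by_contra hne
    have hY2 : Y ^ 2 = 0 := eq_zero_of_algebraMap_mul_eq_zero (sub_ne_zero.2 hne) <| by
      rw [map_sub, map_mul]
      linear_combination hjet w' hw' - A (coeffXY 1 0 w') * hU - A (coeffXY 2 0 w') * hX2 -
        A (coeffXY 1 1 w') * hXY
    exact not_mIdeal_sq_le hdim hI (mIdeal_sq_le_iff.2 ⟨hX2, hXY, hY2⟩)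
  refine ⟨γ, le_antisymm (fun w' hw' => ?_) ?_⟩
  · exact mem_span_add_smul_sq_cube (coeffXY_zero_zero_eq_zero hI' hw') (h01 w' hw') (hkey w' hw')
  · rw [Ideal.span_le, Set.insert_subset_iff, Set.singleton_subset_iff]
    refine ⟨Ideal.Quotient.eq_zero_iff_mem.1 ?_, hm3 (by simpa using Xv_pow_mul_Yv_pow_mem 0 3)⟩
    simpa [Algebra.smul_def] using hU

theorem exists_eq_span_of_sq_mem (hdim : (3 : Cardinal) ≤ Module.rank ℂ (R2 ⧸ I))
    (hI : I = Ideal.span {g, h}) (hm3 : mIdeal ^ 3 ≤ I) (hx2 : Xv ^ 2 ∈ I) :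
    (∃ c : ℂ, I = Ideal.span {Xv ^ 2, (Yv + c • Xv) ^ 2}) ∨
      ∃ γ : ℂ, I = Ideal.span {Xv + γ • Yv ^ 2, Yv ^ 3} := by
  by_cases h10 : ∀ w ∈ I, coeffXY 1 0 w = 0
  · exact Or.inl (exists_eq_span_sq_add_smul_sq hdim hI hm3 hx2 h10)
  · obtain ⟨w, hw, ha⟩ := not_forall₂.1 h10
    exact Or.inr (exists_eq_span_add_smul_sq_cube hdim hI hm3 hx2 hw ha)

theorem exists_eq_span_of_sq_mem_of_sq_mem (hdim : (3 : Cardinal) ≤ Module.rank ℂ (R2 ⧸ I))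
    (hI : I = Ideal.span {g, h}) (hm3 : mIdeal ^ 3 ≤ I) (hx2 : Xv ^ 2 ∈ I) (hy2 : Yv ^ 2 ∈ I) :
    ∃ c : ℂ, I = Ideal.span {Xv ^ 2, (Yv + c • Xv) ^ 2} := by
  refine (exists_eq_span_of_sq_mem hdim hI hm3 hx2).resolve_right fun ⟨γ, hγ⟩ => ?_
  have hU : Ideal.Quotient.mk I Xv + algebraMap ℂ _ γ * Ideal.Quotient.mk I Yv ^ 2 = 0 := by
    simpa [Algebra.smul_def] using Ideal.Quotient.eq_zero_iff_mem.2
      (hγ ▸ Ideal.subset_span (Set.mem_insert _ _) : Xv + γ • Yv ^ 2 ∈ I)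
  obtain ⟨hX2, hY2⟩ : Ideal.Quotient.mk I Xv ^ 2 = 0 ∧ Ideal.Quotient.mk I Yv ^ 2 = 0 := by
    simp only [← map_pow, Ideal.Quotient.eq_zero_iff_mem]
    exact ⟨hx2, hy2⟩
  refine not_mIdeal_sq_le hdim hI (mIdeal_sq_le_iff.2 ⟨hX2, ?_, hY2⟩)
  linear_combination Ideal.Quotient.mk I Yv * hU - algebraMap ℂ _ γ * Ideal.Quotient.mk I Yv * hY2

theorem exists_eq_span_of_sq_mem_of_mul_mem (hdim : (3 : Cardinal) ≤ Module.rank ℂ (R2 ⧸ I))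
    (hI : I = Ideal.span {g, h}) (hm3 : mIdeal ^ 3 ≤ I) (hx2 : Xv ^ 2 ∈ I)
    (hxy : Xv * Yv ∈ I) : ∃ γ : ℂ, I = Ideal.span {Xv + γ • Yv ^ 2, Yv ^ 3} := by
  refine (exists_eq_span_of_sq_mem hdim hI hm3 hx2).resolve_left fun ⟨c, hc⟩ => ?_
  have hV : (Ideal.Quotient.mk I Yv + algebraMap ℂ _ c * Ideal.Quotient.mk I Xv) ^ 2 = 0 := by
    simpa [Algebra.smul_def] using Ideal.Quotient.eq_zero_iff_mem.2
      (hc ▸ Ideal.subset_span (Set.mem_insert_of_mem _ rfl) : (Yv + c • Xv) ^ 2 ∈ I)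
  obtain ⟨hX2, hXY⟩ : Ideal.Quotient.mk I Xv ^ 2 = 0 ∧
      Ideal.Quotient.mk I Xv * Ideal.Quotient.mk I Yv = 0 := by
    simp only [← map_pow, ← map_mul, Ideal.Quotient.eq_zero_iff_mem]
    exact ⟨hx2, hxy⟩
  refine not_mIdeal_sq_le hdim hI (mIdeal_sq_le_iff.2 ⟨hX2, hXY, ?_⟩)
  linear_combination hV - 2 * algebraMap ℂ _ c * hXY - algebraMap ℂ _ c ^ 2 * hX2

end TwoGenerated

theorem pderiv2_eq_pderiv (i : Fin 2) (f : R2) : pderiv2 i f = pderiv ℂ i f := by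
  ext d
  rw [coeff_pderiv, mul_comm]
  rfl

theorem pderiv_mem_mIdeal_pow {k : ℕ} {f : R2} (hf : f ∈ mIdeal ^ (k + 1)) (i : Fin 2) :
    pderiv ℂ i f ∈ mIdeal ^ k := by
  rw [mem_mIdeal_pow_iff] at hf ⊢
  refine le_order fun d hd => ?_
  rw [coeff_pderiv, coeff_of_lt_order, zero_mul]
  rw [map_add, Finsupp.degree_single]
  exact lt_of_lt_of_le (by exact_mod_cast Nat.add_lt_add_right (by exact_mod_cast hd) 1) hf

theorem mem_of_jet3Eq {I : Ideal R2} (hm3 : mIdeal ^ 3 ≤ I) {f j : R2} (hj : jet3Eq f j)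
    {i : Fin 2} (hf : pderiv2 i f ∈ I) {c : ℂ} (hc : c ≠ 0) {w : R2}
    (hw : pderiv ℂ i j = c • w) : w ∈ I := by
  have h := I.sub_mem hf (hm3 (pderiv_mem_mIdeal_pow hj i))
  rw [pderiv2_eq_pderiv, map_sub, sub_sub_cancel, hw] at h
  simpa [smul_smul, inv_mul_cancel₀ hc] using I.smul_of_tower_mem c⁻¹ h

/-- **Lemma (Lemma 4.2 / lem:ideals).** Let `f ∈ R = ℂ⟦x,y⟧` with
`jet₃(f) ∈ {x³ - y³, x²y, x³}`, and let `I = ⟨g, h⟩` be an ideal of `R`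
generated by two elements such that `dim_ℂ(R/I) ≥ 3` and
`⟨∂f/∂x, ∂f/∂y⟩ + m³ ⊆ I`. Then either there is a regular system of
parameters `u, v` with `I = ⟨u², v²⟩` and `jet₃(f) ∈ {x³ - y³, x³}`,
or a regular system of parameters `u, v` with `I = ⟨u, v³⟩` and
`jet₃(f) ∈ {x²y, x³}`. -/
theorem stmt0 (f g h : R2)
    (hjet : jet3Eq f (Xv ^ 3 - Yv ^ 3) ∨ jet3Eq f (Xv ^ 2 * Yv) ∨ jet3Eq f (Xv ^ 3))
    (I : Ideal R2) (hI : I = Ideal.span {g, h})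
    (hdim : (3 : Cardinal) ≤ Module.rank ℂ (R2 ⧸ I))
    (hsub : Ideal.span {pderiv2 0 f, pderiv2 1 f} + mIdeal ^ 3 ≤ I) :
    (∃ u v : R2, Ideal.span {u, v} = mIdeal ∧ I = Ideal.span {u ^ 2, v ^ 2} ∧
        (jet3Eq f (Xv ^ 3 - Yv ^ 3) ∨ jet3Eq f (Xv ^ 3))) ∨
    (∃ u v : R2, Ideal.span {u, v} = mIdeal ∧ I = Ideal.span {u, v ^ 3} ∧
        (jet3Eq f (Xv ^ 2 * Yv) ∨ jet3Eq f (Xv ^ 3))) := by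
  rw [Ideal.add_eq_sup, sup_le_iff, Ideal.span_le, Set.pair_subset_iff] at hsub
  obtain ⟨⟨hfx, hfy⟩, hm3⟩ := hsub
  rcases hjet with hj | hj | hj
  · have hx2 := mem_of_jet3Eq hm3 hj hfx (three_ne_zero (α := ℂ)) (w := Xv ^ 2) (by
      simp [Xv, Yv, Derivation.leibniz_pow, ofNat_smul_eq_nsmul])
    have hy2 := mem_of_jet3Eq hm3 hj hfy (neg_ne_zero.2 (three_ne_zero (α := ℂ))) (w := Yv ^ 2) (by
      simp [Xv, Yv, Derivation.leibniz_pow, ofNat_smul_eq_nsmul])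
    obtain ⟨c, hc⟩ := exists_eq_span_of_sq_mem_of_sq_mem hdim hI hm3 hx2 hy2
    exact Or.inl ⟨Xv, Yv + c • Xv, span_Xv_Yv_add_smul_Xv c, hc, Or.inl hj⟩
  · have hxy := mem_of_jet3Eq hm3 hj hfx (two_ne_zero (α := ℂ)) (w := Xv * Yv) (by
      simp [Xv, Yv, Derivation.leibniz_pow, ofNat_smul_eq_nsmul]; ring)
    have hx2 := mem_of_jet3Eq hm3 hj hfy (one_ne_zero (α := ℂ)) (w := Xv ^ 2) (by
      simp [Xv, Yv])
    obtain ⟨γ, hγ⟩ := exists_eq_span_of_sq_mem_of_mul_mem hdim hI hm3 hx2 hxy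
    exact Or.inr ⟨Xv + γ • Yv ^ 2, Yv, span_Xv_add_smul_sq_Yv γ, hγ, Or.inl hj⟩
  · have hx2 := mem_of_jet3Eq hm3 hj hfx (three_ne_zero (α := ℂ)) (w := Xv ^ 2) (by
      simp [Xv, Derivation.leibniz_pow, ofNat_smul_eq_nsmul])
    rcases exists_eq_span_of_sq_mem hdim hI hm3 hx2 with ⟨c, hc⟩ | ⟨γ, hγ⟩
    · exact Or.inl ⟨Xv, Yv + c • Xv, span_Xv_Yv_add_smul_Xv c, hc, Or.inr hj⟩
    · exact Or.inr ⟨Xv + γ • Yv ^ 2, Yv, span_Xv_add_smul_sq_Yv γ, hγ, Or.inr hj⟩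
end

section
/- Let R = ℂ⟦x,y⟧ and let J be an ideal of R generated by a set of monomials in x and y, such that x² ∈ J, xy² ∈ J, y³ ∈ J and dim_ℂ(R/J) ≥ 3. Then J is one of the five ideals ⟨x², xy², y³⟩, ⟨x², xy, y²⟩, ⟨x², xy, y³⟩, ⟨x², y²⟩, ⟨x, y³⟩. -/
/-- `f` is a monomial `x^a y^b` in `ℂ⟦x,y⟧`. -/
def IsMonomial2 (f : R2) : Prop := ∃ a b : ℕ, f = Xv ^ a * Yv ^ b

namespace MvPowerSeries

variable {K : Type*}

theorem mem_of_coeff_zero_eq_zero_of_coeff_single_eq_zero [CommRing K]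
    {J : Ideal (MvPowerSeries (Fin 2) K)} {i j : Fin 2} (hij : i ≠ j)
    (hi : X i ^ 2 ∈ J) (hj : X j ∈ J) {g : MvPowerSeries (Fin 2) K}
    (h0 : coeff 0 g = 0) (h1 : coeff (Finsupp.single i 1) g = 0) : g ∈ J := by
  let p : MvPowerSeries (Fin 2) K := fun d => if d j = 0 then coeff d g else 0
  have hp : X i ^ 2 ∣ p := by
    refine X_pow_dvd_iff.2 fun m hmi => ?_
    change (if m j = 0 then coeff m g else 0) = 0
    split_ifs with hmj
    · have hm : m = Finsupp.single i (m i) := by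
        ext k
        obtain rfl | rfl : k = i ∨ k = j := by omega
        · simp
        · simp [hmj, hij]
      obtain h | h : m i = 0 ∨ m i = 1 := by omega
      · rwa [hm, h, Finsupp.single_zero]
      · rwa [hm, h]
    · rfl
  have hq : X j ∣ g - p := by
    refine X_dvd_iff.2 fun m hmj => ?_
    change coeff m g - (if m j = 0 then coeff m g else 0) = 0
    rw [if_pos hmj, sub_self]
  simpa using J.add_mem (J.mem_of_dvd hp hi) (J.mem_of_dvd hq hj)

theorem rank_quotient_le_two [Field K] (J : Ideal (MvPowerSeries (Fin 2) K)) {i j : Fin 2}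
    (hij : i ≠ j) (hi : X i ^ 2 ∈ J) (hj : X j ∈ J) :
    Module.rank K (MvPowerSeries (Fin 2) K ⧸ J) ≤ 2 := by
  classical
  let π := Ideal.Quotient.mkₐ K J
  have hspan :
      Submodule.span K (({π 1, π (X i)} : Finset _) : Set (MvPowerSeries (Fin 2) K ⧸ J)) = ⊤ := by
    refine top_unique fun z _ => ?_
    obtain ⟨f, rfl⟩ := Ideal.Quotient.mkₐ_surjective K J z
    have hf : f - (coeff 0 f • 1 + coeff (Finsupp.single i 1) f • X i) ∈ J := by
      apply mem_of_coeff_zero_eq_zero_of_coeff_single_eq_zero hij hi hj <;>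
        simp [coeff_X, coeff_one, Finsupp.single_eq_zero]
    have hπ : π f = π (coeff 0 f • 1 + coeff (Finsupp.single i 1) f • X i) :=
      Ideal.Quotient.eq.2 hf
    rw [Finset.coe_pair, Submodule.mem_span_pair, hπ, map_add, map_smul, map_smul]
    exact ⟨_, _, rfl⟩
  calc Module.rank K (MvPowerSeries (Fin 2) K ⧸ J)
      = Module.rank K (⊤ : Submodule K (MvPowerSeries (Fin 2) K ⧸ J)) := rank_top K _ |>.symm
    _ ≤ _ := hspan.symm ▸ rank_span_finset_le _
    _ ≤ 2 := mod_cast Finset.card_le_two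

end MvPowerSeries

noncomputable def xyMonomial (p : ℕ × ℕ) : R2 := Xv ^ p.1 * Yv ^ p.2

theorem xyMonomial_dvd_xyMonomial {p q : ℕ × ℕ} (h : p ≤ q) : xyMonomial p ∣ xyMonomial q := by
  obtain ⟨a, ha⟩ := Nat.exists_eq_add_of_le h.1
  obtain ⟨b, hb⟩ := Nat.exists_eq_add_of_le h.2
  exact ⟨Xv ^ a * Yv ^ b, by rw [xyMonomial, xyMonomial, ha, hb]; ring⟩

theorem eq_span_image_xyMonomial {J : Ideal R2}
    (hmono : ∃ S : Set R2, (∀ s ∈ S, IsMonomial2 s) ∧ J = Ideal.span S)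
    (G C : Set (ℕ × ℕ)) (hG : ∀ g ∈ G, xyMonomial g ∈ J) (hC : ∀ c ∈ C, xyMonomial c ∉ J)
    (hcover : ∀ p, (∃ g ∈ G, g ≤ p) ∨ ∃ c ∈ C, p ≤ c) :
    J = Ideal.span (xyMonomial '' G) := by
  obtain ⟨S, hS, rfl⟩ := hmono
  refine le_antisymm (Ideal.span_le.2 fun s hs => ?_) (Ideal.span_le.2 (Set.image_subset_iff.2 hG))
  obtain ⟨a, b, rfl⟩ := hS s hs
  change xyMonomial (a, b) ∈ _
  rcases hcover (a, b) with ⟨g, hg, hle⟩ | ⟨c, hc, hle⟩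
  · exact Ideal.mem_of_dvd _ (xyMonomial_dvd_xyMonomial hle) (Ideal.subset_span ⟨g, hg, rfl⟩)
  · exact (hC c hc (Ideal.mem_of_dvd _ (xyMonomial_dvd_xyMonomial hle) (Ideal.subset_span hs))).elim

/-- Let `J` be an ideal of `R = ℂ⟦x,y⟧` generated by a set of monomials, with
`x² ∈ J`, `xy² ∈ J`, `y³ ∈ J` and `dim_ℂ(R/J) ≥ 3`. Then `J` is one of the
five ideals `⟨x², xy², y³⟩`, `⟨x², xy, y²⟩`, `⟨x², xy, y³⟩`, `⟨x², y²⟩`,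
`⟨x, y³⟩`. -/
theorem stmt2 (J : Ideal R2)
    (hmono : ∃ S : Set R2, (∀ s ∈ S, IsMonomial2 s) ∧ J = Ideal.span S)
    (hx2 : Xv ^ 2 ∈ J) (hxy2 : Xv * Yv ^ 2 ∈ J) (hy3 : Yv ^ 3 ∈ J)
    (hdim : (3 : Cardinal) ≤ Module.rank ℂ (R2 ⧸ J)) :
    J = Ideal.span {Xv ^ 2, Xv * Yv ^ 2, Yv ^ 3} ∨
    J = Ideal.span {Xv ^ 2, Xv * Yv, Yv ^ 2} ∨
    J = Ideal.span {Xv ^ 2, Xv * Yv, Yv ^ 3} ∨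
    J = Ideal.span {Xv ^ 2, Yv ^ 2} ∨
    J = Ideal.span {Xv, Yv ^ 3} := by
  have hrank : ¬ Module.rank ℂ (R2 ⧸ J) ≤ 2 := fun h => absurd (hdim.trans h) (by norm_num)
  have hy : Yv ∉ J := fun h => hrank (MvPowerSeries.rank_quotient_le_two J (by decide) hx2 h)
  by_cases hx : Xv ∈ J
  · have hy2 : Yv ^ 2 ∉ J := fun h => hrank (MvPowerSeries.rank_quotient_le_two J (by decide) h hx)
    refine Or.inr <| Or.inr <| Or.inr <| Or.inr <|
      (eq_span_image_xyMonomial hmono {(1, 0), (0, 3)} {(0, 2)} (by simp [xyMonomial, hx, hy3])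
        (by simp [xyMonomial, hy2]) (by rintro ⟨a, b⟩; simp; omega)).trans ?_
    simp [xyMonomial, Set.image_insert_eq]
  by_cases hxy : Xv * Yv ∈ J <;> by_cases hy2 : Yv ^ 2 ∈ J
  · refine Or.inr <| Or.inl <|
      (eq_span_image_xyMonomial hmono {(2, 0), (1, 1), (0, 2)} {(1, 0), (0, 1)}
        (by simp [xyMonomial, hx2, hxy, hy2]) (by simp [xyMonomial, hx, hy])
        (by rintro ⟨a, b⟩; simp; omega)).trans ?_
    simp [xyMonomial, Set.image_insert_eq]
  · refine Or.inr <| Or.inr <| Or.inl <|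
      (eq_span_image_xyMonomial hmono {(2, 0), (1, 1), (0, 3)} {(1, 0), (0, 2)}
        (by simp [xyMonomial, hx2, hxy, hy3]) (by simp [xyMonomial, hx, hy2])
        (by rintro ⟨a, b⟩; simp; omega)).trans ?_
    simp [xyMonomial, Set.image_insert_eq]
  · refine Or.inr <| Or.inr <| Or.inr <| Or.inl <|
      (eq_span_image_xyMonomial hmono {(2, 0), (0, 2)} {(1, 1)}
        (by simp [xyMonomial, hx2, hy2]) (by simp [xyMonomial, hxy])
        (by rintro ⟨a, b⟩; simp; omega)).trans ?_
    simp [xyMonomial, Set.image_insert_eq]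
  · refine Or.inl <|
      (eq_span_image_xyMonomial hmono {(2, 0), (1, 2), (0, 3)} {(1, 1), (0, 2)}
        (by simp [xyMonomial, hx2, hxy2, hy3]) (by simp [xyMonomial, hxy, hy2])
        (by rintro ⟨a, b⟩; simp; omega)).trans ?_
    simp [xyMonomial, Set.image_insert_eq]
end

section
/- Let R = ℂ⟦x,y⟧. If I is an ideal of R generated by two elements with x² ∈ I, y² ∈ I and dim_ℂ(R/I) ≥ 3, then I = ⟨x², y²⟩ (and hence dim_ℂ(R/I) = 4). -/
/-!
Since `J = (x², y²) ⊆ I`, every series is congruent modulo `J` to some `a + b x + c y + d xy`,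
and `R/J` has basis `1, x, y, xy`. As `R/I ≠ 0`, every element of `I` has `a = 0`. If some
element of `I` has a nonzero linear part `b x + c y`, multiplying it by `x` or `y` gives
`xy ∈ I`, so `b x + c y ∈ I` and `R/I` is spanned by `1` and one variable: `dim ≤ 2`. Hence
`I ⊆ (x, y)²`, and if `I ⊄ J` then again `xy ∈ I`, i.e. `I = (x, y)²`. But for `g, h ∈ (x, y)²`
the quadratic part of `p g + q h` is `p(0)` times that of `g` plus `q(0)` times that of `h`,
so two elements cannot generate the three independent quadratic parts of `x², xy, y²`.
Therefore `I = J`.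
-/

open MvPowerSeries

lemma constantCoeff_eq_zero_of_mem {σ k : Type*} [Field k] {I : Ideal (MvPowerSeries σ k)}
    (hI : I ≠ ⊤) {f : MvPowerSeries σ k} (hf : f ∈ I) : constantCoeff f = 0 := by
  by_contra h
  exact hI (I.eq_top_of_isUnit_mem hf (isUnit_iff_constantCoeff.mpr (isUnit_iff_ne_zero.mpr h)))

lemma rank_quotient_le_of_forall_exists_sub_mem {K A ι : Type*} [Field K] [CommRing A]
    [Algebra K A] [Fintype ι] {I : Ideal A} (u : ι → A)
    (h : ∀ r : A, ∃ c : ι → K, r - ∑ i, c i • u i ∈ I) :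
    Module.rank K (A ⧸ I) ≤ Fintype.card ι := by
  have hsurj : Function.Surjective
      (Fintype.linearCombination K (fun i => Ideal.Quotient.mk I (u i))) := by
    intro t
    obtain ⟨r, rfl⟩ := Ideal.Quotient.mk_surjective t
    obtain ⟨c, hc⟩ := h r
    refine ⟨c, ?_⟩
    rw [Fintype.linearCombination_apply, eq_comm, ← sub_eq_zero]
    have hmk (a : K) (x : A) : Ideal.Quotient.mk I (a • x) = a • Ideal.Quotient.mk I x :=
      Submodule.Quotient.mk_smul _ _ _
    simpa only [map_sub, map_sum, hmk] using Ideal.Quotient.eq_zero_iff_mem.mpr hc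
  simpa using (Fintype.linearCombination K _).lift_rank_le_of_surjective hsurj

lemma rank_quotient_le_two_of_smul_add_smul_mem {K A : Type*} [Field K] [CommRing A]
    [Algebra K A] {I : Ideal A} {u v : A}
    (hspan : ∀ r : A, ∃ α β γ : K, r - (α • 1 + β • u + γ • v) ∈ I) {b c : K}
    (hbc : b • u + c • v ∈ I) (hb : b ≠ 0) : Module.rank K (A ⧸ I) ≤ 2 := by
  refine (rank_quotient_le_of_forall_exists_sub_mem ![1, v] fun r => ?_).trans_eq (by simp)
  obtain ⟨α, β, γ, hr⟩ := hspan r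
  refine ⟨![α, γ - β / b * c], ?_⟩
  have key : r - ∑ i, ![α, γ - β / b * c] i • ![1, v] i =
      (r - (α • 1 + β • u + γ • v)) + (β / b) • (b • u + c • v) := by
    simp only [Fin.sum_univ_two, Matrix.cons_val_zero, Matrix.cons_val_one, smul_add, smul_smul,
      div_mul_cancel₀ _ hb, sub_smul]
    abel
  rw [key]
  exact add_mem hr (I.smul_of_tower_mem _ hbc)

lemma coeff_mul_eq_constantCoeff_mul_coeff {σ R : Type*} [CommSemiring R]
    {e : σ →₀ ℕ} {w : MvPowerSeries σ R} (hw : ∀ t < e, coeff t w = 0) (p : MvPowerSeries σ R) :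
    coeff e (p * w) = constantCoeff p * coeff e w := by
  classical
  rw [coeff_mul, Finset.sum_eq_single_of_mem (0, e) (by simp), coeff_zero_eq_constantCoeff_apply]
  rintro ⟨s, t⟩ hst hne
  rw [Finset.HasAntidiagonal.mem_antidiagonal] at hst
  have hs : s ≠ 0 := by rintro rfl; simp_all
  have ht : t < e := hst ▸ lt_add_of_pos_left t (pos_iff_ne_zero.mpr hs)
  rw [hw t ht, mul_zero]

noncomputable def expXY (i j : ℕ) : Fin 2 →₀ ℕ := Finsupp.single 0 i + Finsupp.single 1 j

@[simp] lemma expXY_apply_zero (i j : ℕ) : expXY i j 0 = i := by simp [expXY]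
@[simp] lemma expXY_apply_one (i j : ℕ) : expXY i j 1 = j := by simp [expXY]

lemma expXY_eta (e : Fin 2 →₀ ℕ) : expXY (e 0) (e 1) = e := by
  ext s; fin_cases s <;> simp

lemma expXY_zero_zero : expXY 0 0 = 0 := by simp [expXY]

@[simp] lemma expXY_inj {i j k l : ℕ} : expXY i j = expXY k l ↔ i = k ∧ j = l :=
  ⟨fun h => ⟨by simpa using congr($h 0), by simpa using congr($h 1)⟩,
    by rintro ⟨rfl, rfl⟩; rfl⟩

lemma X_pow_mul_Y_pow_eq_monomial (i j : ℕ) : Xv ^ i * Yv ^ j = monomial (expXY i j) 1 := by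
  rw [Xv, Yv, X_pow_eq, X_pow_eq, monomial_mul_monomial, one_mul, expXY]

lemma coeff_X_pow_mul_Y_pow (i j k l : ℕ) :
    coeff (expXY k l) (Xv ^ i * Yv ^ j) = if k = i ∧ l = j then 1 else 0 := by
  simp only [X_pow_mul_Y_pow_eq_monomial, coeff_monomial, expXY_inj]

lemma mem_span_X_sq_Y_sq_iff {f : R2} :
    f ∈ Ideal.span {Xv ^ 2, Yv ^ 2} ↔ ∀ e : Fin 2 →₀ ℕ, e 0 < 2 → e 1 < 2 → coeff e f = 0 := by
  constructor
  · intro hf e he0 he1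
    obtain ⟨p, q, rfl⟩ := Ideal.mem_span_pair.mp hf
    have hx : coeff e (p * Xv ^ 2) = 0 := X_pow_dvd_iff.mp (dvd_mul_left (X 0 ^ 2) p) e he0
    have hy : coeff e (q * Yv ^ 2) = 0 := X_pow_dvd_iff.mp (dvd_mul_left (X 1 ^ 2) q) e he1
    rw [map_add, hx, hy, add_zero]
  · intro hf
    let f₁ : R2 := fun e => if e 0 < 2 then coeff e f else 0
    have hf₁ (e : Fin 2 →₀ ℕ) : coeff e f₁ = if e 0 < 2 then coeff e f else 0 := rfl
    have h₀ : X 0 ^ 2 ∣ f - f₁ := X_pow_dvd_iff.mpr fun e he => by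
      rw [map_sub, hf₁, if_pos he, sub_self]
    have h₁ : X 1 ^ 2 ∣ f₁ := X_pow_dvd_iff.mpr fun e he => by
      by_cases he0 : e 0 < 2
      · rw [hf₁, if_pos he0, hf e he0 he]
      · rw [hf₁, if_neg he0]
    obtain ⟨p, hp⟩ := h₀
    obtain ⟨q, hq⟩ := h₁
    exact Ideal.mem_span_pair.mpr ⟨p, q, by
      rw [mul_comm p, mul_comm q, Xv, Yv, ← hp, ← hq, sub_add_cancel]⟩

noncomputable def lowPart (f : R2) : R2 :=
  constantCoeff f • 1 + coeff (expXY 1 0) f • Xv + coeff (expXY 0 1) f • Yv +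
    coeff (expXY 1 1) f • (Xv * Yv)

lemma sub_lowPart_mem_span_X_sq_Y_sq (f : R2) :
    f - lowPart f ∈ Ideal.span {Xv ^ 2, Yv ^ 2} := by
  have hpow : lowPart f = coeff (expXY 0 0) f • (Xv ^ 0 * Yv ^ 0) +
      coeff (expXY 1 0) f • (Xv ^ 1 * Yv ^ 0) + coeff (expXY 0 1) f • (Xv ^ 0 * Yv ^ 1) +
      coeff (expXY 1 1) f • (Xv ^ 1 * Yv ^ 1) := by
    simp [lowPart, expXY_zero_zero]
  refine mem_span_X_sq_Y_sq_iff.mpr fun e he0 he1 => ?_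
  rw [← expXY_eta e, hpow]
  simp only [map_sub, map_add, map_smul, coeff_X_pow_mul_Y_pow]
  interval_cases e 0 <;> interval_cases e 1 <;> simp [expXY_zero_zero]

lemma X_mul_sub_smul_X_mul_Y_mem {f : R2} (hf : constantCoeff f = 0) :
    Xv * f - coeff (expXY 0 1) f • (Xv * Yv) ∈ Ideal.span {Xv ^ 2, Yv ^ 2} := by
  have key : Xv * f - coeff (expXY 0 1) f • (Xv * Yv) = Xv * (f - lowPart f) +
      (coeff (expXY 1 0) f • 1 + coeff (expXY 1 1) f • Yv) * Xv ^ 2 := by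
    simp only [lowPart, hf, zero_smul, zero_add, smul_eq_C_mul]
    ring
  rw [key]
  exact add_mem (Ideal.mul_mem_left _ _ (sub_lowPart_mem_span_X_sq_Y_sq f))
    (Ideal.mul_mem_left _ _ (Ideal.subset_span (by simp)))

lemma Y_mul_sub_smul_X_mul_Y_mem {f : R2} (hf : constantCoeff f = 0) :
    Yv * f - coeff (expXY 1 0) f • (Xv * Yv) ∈ Ideal.span {Xv ^ 2, Yv ^ 2} := by
  have key : Yv * f - coeff (expXY 1 0) f • (Xv * Yv) = Yv * (f - lowPart f) +
      (coeff (expXY 0 1) f • 1 + coeff (expXY 1 1) f • Xv) * Yv ^ 2 := by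
    simp only [lowPart, hf, zero_smul, zero_add, smul_eq_C_mul]
    ring
  rw [key]
  exact add_mem (Ideal.mul_mem_left _ _ (sub_lowPart_mem_span_X_sq_Y_sq f))
    (Ideal.mul_mem_left _ _ (Ideal.subset_span (by simp)))

lemma X_mul_Y_mem_of_notMem {I : Ideal R2} (hJ : Ideal.span {Xv ^ 2, Yv ^ 2} ≤ I) {f : R2}
    (hf : f ∈ I) (hf₀ : constantCoeff f = 0) (hfJ : f ∉ Ideal.span {Xv ^ 2, Yv ^ 2}) :
    Xv * Yv ∈ I := by
  obtain ⟨w, hw, c, hc, hwJ⟩ : ∃ w ∈ I, ∃ c : ℂ, c ≠ 0 ∧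
      w - c • (Xv * Yv) ∈ Ideal.span {Xv ^ 2, Yv ^ 2} := by
    by_cases hb : coeff (expXY 1 0) f = 0
    · by_cases hc : coeff (expXY 0 1) f = 0
      · have hfJ' := sub_lowPart_mem_span_X_sq_Y_sq f
        simp only [lowPart, hf₀, hb, hc, zero_smul, zero_add] at hfJ'
        refine ⟨f, hf, coeff (expXY 1 1) f, fun hd => hfJ ?_, hfJ'⟩
        simpa [hd] using hfJ'
      · exact ⟨Xv * f, I.mul_mem_left _ hf, _, hc, X_mul_sub_smul_X_mul_Y_mem hf₀⟩
    · exact ⟨Yv * f, I.mul_mem_left _ hf, _, hb, Y_mul_sub_smul_X_mul_Y_mem hf₀⟩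
  have hcxy : c • (Xv * Yv) ∈ I := by simpa using I.sub_mem hw (hJ hwJ)
  exact ((I.restrictScalars ℂ).smul_mem_iff hc).mp hcxy

lemma coeff_eq_zero_of_lt_expXY {i j : ℕ} (hij : i + j = 2) {f : R2}
    (hf : ∀ i j, i + j ≤ 1 → coeff (expXY i j) f = 0) : ∀ t < expXY i j, coeff t f = 0 := by
  intro t ht
  have h0 : t 0 ≤ i := by simpa using ht.le 0
  have h1 : t 1 ≤ j := by simpa using ht.le 1
  have hne : t 0 + t 1 ≠ i + j := fun h => ht.ne <| by
    rw [← expXY_eta t, expXY_inj]; omega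
  rw [← expXY_eta t]
  exact hf _ _ (by omega)

lemma ne_span_pair_of_X_sq_X_mul_Y_Y_sq_mem {I : Ideal R2}
    (hI : ∀ f ∈ I, ∀ i j, i + j ≤ 1 → coeff (expXY i j) f = 0)
    (hx2 : Xv ^ 2 ∈ I) (hxy : Xv * Yv ∈ I) (hy2 : Yv ^ 2 ∈ I) (g h : R2) :
    I ≠ Ideal.span {g, h} := by
  rintro rfl
  let ψ : R2 →ₗ[ℂ] Fin 3 → ℂ :=
    LinearMap.pi ![coeff (expXY 2 0), coeff (expXY 1 1), coeff (expXY 0 2)]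
  have hψ (p q : R2) : ψ (p * g + q * h) = constantCoeff p • ψ g + constantCoeff q • ψ h := by
    have hg := hI g (Ideal.subset_span (by simp))
    have hh := hI h (Ideal.subset_span (by simp))
    have key (i j : ℕ) (hij : i + j = 2) : coeff (expXY i j) (p * g + q * h) =
        constantCoeff p * coeff (expXY i j) g + constantCoeff q * coeff (expXY i j) h := by
      rw [map_add, coeff_mul_eq_constantCoeff_mul_coeff (coeff_eq_zero_of_lt_expXY hij hg),
        coeff_mul_eq_constantCoeff_mul_coeff (coeff_eq_zero_of_lt_expXY hij hh)]
    ext k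
    fin_cases k
    exacts [key 2 0 rfl, key 1 1 rfl, key 0 2 rfl]
  let Φ := Fintype.linearCombination ℂ ![ψ g, ψ h]
  have hsurj : Function.Surjective Φ := by
    intro v
    have hx2' : Xv ^ 2 = monomial (expXY 2 0) 1 := by
      simpa using X_pow_mul_Y_pow_eq_monomial 2 0
    have hxy' : Xv * Yv = monomial (expXY 1 1) 1 := by
      simpa using X_pow_mul_Y_pow_eq_monomial 1 1
    have hy2' : Yv ^ 2 = monomial (expXY 0 2) 1 := by
      simpa using X_pow_mul_Y_pow_eq_monomial 0 2
    have hw : ψ (v 0 • Xv ^ 2 + v 1 • (Xv * Yv) + v 2 • Yv ^ 2) = v := by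
      ext k
      fin_cases k <;> simp [ψ, hx2', hxy', hy2', coeff_monomial]
    have hwI : v 0 • Xv ^ 2 + v 1 • (Xv * Yv) + v 2 • Yv ^ 2 ∈ Ideal.span {g, h} :=
      add_mem (add_mem (Submodule.smul_of_tower_mem _ _ hx2)
        (Submodule.smul_of_tower_mem _ _ hxy)) (Submodule.smul_of_tower_mem _ _ hy2)
    obtain ⟨p, q, hpq⟩ := Ideal.mem_span_pair.mp hwI
    refine ⟨![constantCoeff p, constantCoeff q], ?_⟩
    rw [Fintype.linearCombination_apply, Fin.sum_univ_two, ← hw, ← hpq, hψ]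
    rfl
  exact absurd (Φ.rank_le_of_surjective hsurj) (by norm_num)

noncomputable def lowCoeffs : R2 →ₗ[ℂ] Fin 2 × Fin 2 → ℂ :=
  LinearMap.pi fun p => coeff (expXY p.1 p.2)

lemma ker_lowCoeffs :
    LinearMap.ker lowCoeffs = (Ideal.span {Xv ^ 2, Yv ^ 2}).restrictScalars ℂ := by
  ext f
  rw [LinearMap.mem_ker, Submodule.restrictScalars_mem, mem_span_X_sq_Y_sq_iff, funext_iff]
  constructor
  · intro hf e he0 he1
    simpa [lowCoeffs, expXY_eta] using hf (⟨e 0, he0⟩, ⟨e 1, he1⟩)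
  · rintro hf ⟨i, j⟩
    simpa [lowCoeffs] using hf (expXY i j) (by simpa using i.isLt) (by simpa using j.isLt)

lemma lowCoeffs_surjective : Function.Surjective lowCoeffs := by
  intro v
  refine ⟨∑ p, monomial (expXY p.1 p.2) (v p), ?_⟩
  ext ⟨i, j⟩
  fin_cases i <;> fin_cases j <;> simp [lowCoeffs, coeff_monomial, Fintype.sum_prod_type]

lemma rank_quotient_span_X_sq_Y_sq : Module.rank ℂ (R2 ⧸ Ideal.span {Xv ^ 2, Yv ^ 2}) = 4 := by
  have e := (Submodule.Quotient.restrictScalarsEquiv ℂ (Ideal.span {Xv ^ 2, Yv ^ 2})).symm.trans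
    ((Submodule.quotEquivOfEq _ _ ker_lowCoeffs.symm).trans
      (lowCoeffs.quotKerEquivOfSurjective lowCoeffs_surjective))
  rw [e.rank_eq, rank_fun']
  simp

lemma rank_quotient_le_two_of_linear_coeff_ne_zero {I : Ideal R2}
    (hJ : Ideal.span {Xv ^ 2, Yv ^ 2} ≤ I) {f : R2} (hf : f ∈ I) (hf₀ : constantCoeff f = 0)
    (hlin : coeff (expXY 1 0) f ≠ 0 ∨ coeff (expXY 0 1) f ≠ 0) :
    Module.rank ℂ (R2 ⧸ I) ≤ 2 := by
  have hfJ : f ∉ Ideal.span {Xv ^ 2, Yv ^ 2} := fun h => by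
    rw [mem_span_X_sq_Y_sq_iff] at h
    rcases hlin with h' | h' <;> exact h' (h _ (by simp) (by simp))
  have hxy := X_mul_Y_mem_of_notMem hJ hf hf₀ hfJ
  have hspan (r : R2) : ∃ α β γ : ℂ, r - (α • 1 + β • Xv + γ • Yv) ∈ I := by
    refine ⟨constantCoeff r, coeff (expXY 1 0) r, coeff (expXY 0 1) r, ?_⟩
    have key : r - (constantCoeff r • 1 + coeff (expXY 1 0) r • Xv + coeff (expXY 0 1) r • Yv) =
        (r - lowPart r) + coeff (expXY 1 1) r • (Xv * Yv) := by
      rw [lowPart]; abel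
    rw [key]
    exact add_mem (hJ (sub_lowPart_mem_span_X_sq_Y_sq r)) (I.smul_of_tower_mem _ hxy)
  have hbc : coeff (expXY 1 0) f • Xv + coeff (expXY 0 1) f • Yv ∈ I := by
    have key : coeff (expXY 1 0) f • Xv + coeff (expXY 0 1) f • Yv =
        f - (f - lowPart f) - coeff (expXY 1 1) f • (Xv * Yv) := by
      rw [lowPart, hf₀, zero_smul, zero_add]; abel
    rw [key]
    exact sub_mem (sub_mem hf (hJ (sub_lowPart_mem_span_X_sq_Y_sq f)))
      (I.smul_of_tower_mem _ hxy)
  rcases hlin with hb | hc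
  · exact rank_quotient_le_two_of_smul_add_smul_mem hspan hbc hb
  · refine rank_quotient_le_two_of_smul_add_smul_mem (u := Yv) (v := Xv) (fun r => ?_)
      (by rwa [add_comm]) hc
    obtain ⟨α, β, γ, hr⟩ := hspan r
    exact ⟨α, γ, β, by rwa [add_right_comm]⟩

/-- If `I` is an ideal of `R = ℂ⟦x,y⟧` generated by two elements with
`x² ∈ I`, `y² ∈ I` and `dim_ℂ(R/I) ≥ 3`, then `I = ⟨x², y²⟩` (and hence
`dim_ℂ(R/I) = 4`). -/
theorem stmt5 (I : Ideal R2) (hgen : ∃ g h : R2, I = Ideal.span {g, h})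
    (hx2 : Xv ^ 2 ∈ I) (hy2 : Yv ^ 2 ∈ I)
    (hdim : (3 : Cardinal) ≤ Module.rank ℂ (R2 ⧸ I)) :
    I = Ideal.span {Xv ^ 2, Yv ^ 2} ∧ Module.rank ℂ (R2 ⧸ I) = 4 := by
  obtain ⟨g, h, hgh⟩ := hgen
  have hJ : Ideal.span {Xv ^ 2, Yv ^ 2} ≤ I :=
    Ideal.span_le.mpr (Set.insert_subset hx2 (Set.singleton_subset_iff.mpr hy2))
  have hI : I ≠ ⊤ := by
    rintro rfl
    simp at hdim
  have h₀ (f : R2) (hf : f ∈ I) : constantCoeff f = 0 := constantCoeff_eq_zero_of_mem hI hf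
  have h₁ (f : R2) (hf : f ∈ I) : coeff (expXY 1 0) f = 0 ∧ coeff (expXY 0 1) f = 0 := by
    by_contra hne
    have := hdim.trans (rank_quotient_le_two_of_linear_coeff_ne_zero hJ hf (h₀ f hf)
      (not_and_or.mp hne))
    norm_num at this
  have hIJ : I ≤ Ideal.span {Xv ^ 2, Yv ^ 2} := by
    intro f hf
    by_contra hfJ
    refine ne_span_pair_of_X_sq_X_mul_Y_Y_sq_mem (fun f' hf' i j hij => ?_) hx2
      (X_mul_Y_mem_of_notMem hJ hf (h₀ f hf) hfJ) hy2 g h hgh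
    obtain ⟨rfl, rfl⟩ | ⟨rfl, rfl⟩ | ⟨rfl, rfl⟩ :
        (i = 0 ∧ j = 0) ∨ (i = 1 ∧ j = 0) ∨ (i = 0 ∧ j = 1) := by omega
    exacts [expXY_zero_zero ▸ h₀ f' hf', (h₁ f' hf').1, (h₁ f' hf').2]
  have hIeq : I = Ideal.span {Xv ^ 2, Yv ^ 2} := le_antisymm hIJ hJ
  exact ⟨hIeq, hIeq ▸ rank_quotient_span_X_sq_Y_sq⟩
end

section
/- Let R = ℂ⟦x,y⟧ with maximal ideal m = ⟨x,y⟩. If I is an ideal of R containing an element g with g ∈ m but g ∉ m² (i.e. an element of order one), and dim_ℂ(R/I) = 3, then there exist u, v ∈ R with ⟨u,v⟩ = m such that I = ⟨u, v³⟩. -/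
/-!
Because `g` has order one, `m = ⟨g, v⟩` with `v = x` or `v = y`. As `R = ℂ + m`, every series is
congruent modulo `⟨g, vⁿ⟩` to a polynomial of degree `< n` in `v`. A nonzero polynomial `p` with
trailing degree `t` satisfies `p(v) = vᵗ · (unit)`, so `p(v) ∈ I` forces `vᵗ ∈ I` and hence
`dim R/I ≤ t`. When `dim R/I = 3`, a linear relation among `1, v, v², v³` in `R/I` therefore gives
`v³ ∈ I`, and no nonzero polynomial of degree `< 3` in `v` lies in `I`; so `I = ⟨g, v³⟩`.
-/

open IsLocalRing Polynomial

lemma Ideal.span_pair_eq_of_isUnit {A : Type*} [CommRing A] {g x y a b : A}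
    (hg : a * x + b * y = g) (ha : IsUnit a) :
    Ideal.span {g, y} = Ideal.span {x, y} := by
  obtain ⟨u, rfl⟩ := ha
  refine le_antisymm (Ideal.span_le.2 ?_) (Ideal.span_le.2 ?_) <;>
    simp only [Set.insert_subset_iff, Set.singleton_subset_iff, SetLike.mem_coe,
      Ideal.mem_span_pair]
  · exact ⟨⟨u, b, hg⟩, 0, 1, by ring⟩
  · exact ⟨⟨↑u⁻¹, -(↑u⁻¹ * b), by linear_combination -(↑u⁻¹ : A) * hg + x * u.inv_mul⟩, 0, 1,
      by ring⟩

lemma IsLocalRing.exists_span_pair_eq_maximalIdeal {A : Type*} [CommRing A] [IsLocalRing A]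
    {x y g : A} (hxy : Ideal.span {x, y} = maximalIdeal A) (hg : g ∈ maximalIdeal A)
    (hg2 : g ∉ maximalIdeal A ^ 2) : ∃ v, Ideal.span {g, v} = maximalIdeal A := by
  rw [← hxy, Ideal.mem_span_pair] at hg
  obtain ⟨a, b, hab⟩ := hg
  by_cases ha : IsUnit a
  · exact ⟨y, (Ideal.span_pair_eq_of_isUnit hab ha).trans hxy⟩
  have hb : IsUnit b := by
    by_contra hb
    have hx : x ∈ maximalIdeal A := hxy ▸ Ideal.subset_span (by simp)
    have hy : y ∈ maximalIdeal A := hxy ▸ Ideal.subset_span (by simp)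
    refine hg2 (hab ▸ pow_two (maximalIdeal A) ▸ add_mem ?_ ?_)
    · exact Ideal.mul_mem_mul ((mem_maximalIdeal a).2 ha) hx
    · exact Ideal.mul_mem_mul ((mem_maximalIdeal b).2 hb) hy
  refine ⟨x, (Ideal.span_pair_eq_of_isUnit (by rw [← hab, add_comm]) hb).trans ?_⟩
  rwa [Set.pair_comm]

section ResidueField

variable {k A : Type*} [Field k] [CommRing A] [IsLocalRing A] [Algebra k A]

lemma IsLocalRing.exists_sub_algebraMap_mem_maximalIdeal
    (hres : Function.Surjective (algebraMap k (ResidueField A))) (r : A) :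
    ∃ c : k, r - algebraMap k A c ∈ maximalIdeal A := by
  obtain ⟨c, hc⟩ := hres (residue A r)
  refine ⟨c, (residue_eq_zero_iff _).1 ?_⟩
  rw [map_sub, ← hc, IsScalarTower.algebraMap_apply k A (ResidueField A),
    ResidueField.algebraMap_eq, sub_self]

lemma isUnit_aeval_of_coeff_zero_ne_zero {v : A} (hv : v ∈ maximalIdeal A) {q : k[X]}
    (hq : q.coeff 0 ≠ 0) : IsUnit (aeval v q) := by
  by_contra hunit
  obtain ⟨s, hs⟩ := X_dvd_sub_C (p := q)
  have hsplit : aeval v q - algebraMap k A (q.coeff 0) = v * aeval v s := by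
    simpa using congrArg (aeval v) hs
  have hc : algebraMap k A (q.coeff 0) ∈ maximalIdeal A := by
    rw [← sub_sub_cancel (aeval v q) (algebraMap k A _), hsplit]
    exact sub_mem ((mem_maximalIdeal _).2 hunit) (Ideal.mul_mem_right _ _ hv)
  exact (mem_maximalIdeal _).1 hc ((isUnit_iff_ne_zero.2 hq).map _)

lemma pow_natTrailingDegree_mem_of_aeval_mem {v : A} (hv : v ∈ maximalIdeal A) {I : Ideal A}
    {p : k[X]} (hp : p ≠ 0) (h : aeval v p ∈ I) : v ^ p.natTrailingDegree ∈ I := by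
  obtain ⟨q, hpq⟩ : X ^ p.natTrailingDegree ∣ p :=
    X_pow_dvd_iff.2 fun d hd => coeff_eq_zero_of_lt_natTrailingDegree hd
  have hq : q.coeff 0 ≠ 0 := by
    rw [← coeff_X_pow_mul q p.natTrailingDegree 0, zero_add, ← hpq]
    exact trailingCoeff_nonzero_iff_nonzero.2 hp
  rw [hpq, map_mul, map_pow, aeval_X] at h
  exact (Ideal.mul_unit_mem_iff_mem I (isUnit_aeval_of_coeff_zero_ne_zero hv hq)).1 h

variable {g v : A}

lemma exists_aeval_sub_mem_span_pair_pow
    (hres : Function.Surjective (algebraMap k (ResidueField A)))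
    (hm : Ideal.span {g, v} = maximalIdeal A) (r : A) (n : ℕ) :
    ∃ p ∈ degreeLT k n, r - aeval v p ∈ Ideal.span {g, v ^ n} := by
  induction n with
  | zero => exact ⟨0, zero_mem _, Ideal.mem_span_pair.2 ⟨0, r, by simp⟩⟩
  | succ n ih =>
    obtain ⟨p, hp, hr⟩ := ih
    obtain ⟨a, b, hab⟩ := Ideal.mem_span_pair.1 hr
    obtain ⟨c, hc⟩ := exists_sub_algebraMap_mem_maximalIdeal hres b
    obtain ⟨a', b', hab'⟩ := Ideal.mem_span_pair.1 (hm ▸ hc)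
    refine ⟨p + C c * X ^ n, add_mem (degreeLT_mono n.le_succ hp) ?_, ?_⟩
    · exact mem_degreeLT.2 ((degree_C_mul_X_pow_le n c).trans_lt (by exact_mod_cast n.lt_succ_self))
    · refine Ideal.mem_span_pair.2 ⟨a + a' * v ^ n, b', ?_⟩
      simp only [map_add, map_mul, map_pow, aeval_C, aeval_X]
      linear_combination hab + v ^ n * hab'

lemma rank_quotient_le_of_pow_mem
    (hres : Function.Surjective (algebraMap k (ResidueField A)))
    (hm : Ideal.span {g, v} = maximalIdeal A) {I : Ideal A} (hg : g ∈ I) {n : ℕ}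
    (hvn : v ^ n ∈ I) : Module.rank k (A ⧸ I) ≤ n := by
  let f : degreeLT k n →ₗ[k] A ⧸ I :=
    ((Ideal.Quotient.mkₐ k I).comp (aeval v)).toLinearMap ∘ₗ (degreeLT k n).subtype
  have hf : Function.Surjective f := by
    intro x
    obtain ⟨r, rfl⟩ := Ideal.Quotient.mk_surjective x
    obtain ⟨p, hp, hr⟩ := exists_aeval_sub_mem_span_pair_pow hres hm r n
    have hJ : Ideal.span {g, v ^ n} ≤ I := by
      simp [Ideal.span_le, Set.insert_subset_iff, hg, hvn]
    exact ⟨⟨p, hp⟩, (Ideal.Quotient.eq.2 (hJ hr)).symm⟩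
  refine Cardinal.lift_le_nat_iff.1 ((f.lift_rank_le_of_surjective hf).trans_eq ?_)
  rw [(degreeLTEquiv k n).rank_eq, rank_fin_fun, Cardinal.lift_natCast]

lemma le_natTrailingDegree_of_aeval_mem
    (hres : Function.Surjective (algebraMap k (ResidueField A)))
    (hm : Ideal.span {g, v} = maximalIdeal A) {I : Ideal A} (hg : g ∈ I) {n : ℕ}
    (hdim : Module.rank k (A ⧸ I) = n) {p : k[X]} (hp : p ≠ 0) (h : aeval v p ∈ I) :
    n ≤ p.natTrailingDegree := by
  have hv : v ∈ maximalIdeal A := hm ▸ Ideal.subset_span (by simp)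
  exact_mod_cast hdim ▸ rank_quotient_le_of_pow_mem hres hm hg
    (pow_natTrailingDegree_mem_of_aeval_mem hv hp h)

lemma pow_mem_of_rank_quotient_eq
    (hres : Function.Surjective (algebraMap k (ResidueField A)))
    (hm : Ideal.span {g, v} = maximalIdeal A) {I : Ideal A} (hg : g ∈ I) {n : ℕ}
    (hdim : Module.rank k (A ⧸ I) = n) : v ^ n ∈ I := by
  have : FiniteDimensional k (A ⧸ I) :=
    Module.rank_lt_aleph0_iff.1 (hdim ▸ Cardinal.natCast_lt_aleph0)
  let f : degreeLT k (n + 1) →ₗ[k] A ⧸ I :=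
    ((Ideal.Quotient.mkₐ k I).comp (aeval v)).toLinearMap ∘ₗ (degreeLT k (n + 1)).subtype
  obtain ⟨⟨p, hpdeg⟩, hpker, hp0⟩ := Submodule.exists_mem_ne_zero_of_ne_bot
    (LinearMap.ker_ne_bot_of_finrank_lt (f := f) (by
      rw [Module.finrank_eq_of_rank_eq hdim, (degreeLTEquiv k (n + 1)).finrank_eq,
        Module.finrank_fin_fun]
      exact n.lt_succ_self))
  have hp : p ≠ 0 := by simpa using hp0
  have hpI : aeval v p ∈ I := Ideal.Quotient.eq_zero_iff_mem.1 hpker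
  have hdeg := (natDegree_lt_iff_degree_lt hp).2 (mem_degreeLT.1 hpdeg)
  have hn := le_natTrailingDegree_of_aeval_mem hres hm hg hdim hp hpI
  obtain rfl : p.natTrailingDegree = n := by
    have := natTrailingDegree_le_natDegree p
    omega
  exact pow_natTrailingDegree_mem_of_aeval_mem (hm ▸ Ideal.subset_span (by simp)) hp hpI

theorem eq_span_pair_pow_of_rank_quotient_eq
    (hres : Function.Surjective (algebraMap k (ResidueField A)))
    (hm : Ideal.span {g, v} = maximalIdeal A) {I : Ideal A} (hg : g ∈ I) {n : ℕ}
    (hdim : Module.rank k (A ⧸ I) = n) : I = Ideal.span {g, v ^ n} := by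
  have hJ : Ideal.span {g, v ^ n} ≤ I := by
    simp [Ideal.span_le, Set.insert_subset_iff, hg, pow_mem_of_rank_quotient_eq hres hm hg hdim]
  refine le_antisymm (fun r hr => ?_) hJ
  obtain ⟨p, hpdeg, hrp⟩ := exists_aeval_sub_mem_span_pair_pow hres hm r n
  suffices p = 0 by simpa [this] using hrp
  by_contra hp
  have hpI : aeval v p ∈ I := by simpa using I.sub_mem hr (hJ hrp)
  have := le_natTrailingDegree_of_aeval_mem hres hm hg hdim hp hpI
  have := natTrailingDegree_le_natDegree p
  have := (natDegree_lt_iff_degree_lt hp).2 (mem_degreeLT.1 hpdeg)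
  omega

end ResidueField

namespace MvPowerSeries

lemma mem_span_X_pair_of_constantCoeff_eq_zero {R : Type*} [CommRing R]
    {φ : MvPowerSeries (Fin 2) R} (h : constantCoeff φ = 0) :
    φ ∈ Ideal.span {X 0, X 1} := by
  classical
  -- `ψ` is `φ` with `x = 0` substituted
  let ψ : MvPowerSeries (Fin 2) R := fun d => if d 0 = 0 then coeff d φ else 0
  have hψ : ∀ d, coeff d ψ = if d 0 = 0 then coeff d φ else 0 := fun _ => rfl
  obtain ⟨a, ha⟩ : X 0 ∣ φ - ψ := X_dvd_iff.2 fun d hd => by simp [hψ, hd]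
  obtain ⟨b, hb⟩ : X 1 ∣ ψ := X_dvd_iff.2 fun d hd => by
    rw [hψ]
    split_ifs with hd0
    · obtain rfl : d = 0 := by ext i; fin_cases i <;> assumption
      simpa using h
    · rfl
  exact Ideal.mem_span_pair.2 ⟨a, b, by linear_combination -ha - hb⟩

variable {σ k : Type*} [Field k]

lemma mem_maximalIdeal_iff_constantCoeff_eq_zero {φ : MvPowerSeries σ k} :
    φ ∈ maximalIdeal (MvPowerSeries σ k) ↔ constantCoeff φ = 0 := by
  rw [mem_maximalIdeal, mem_nonunits_iff, isUnit_iff_constantCoeff, isUnit_iff_ne_zero, not_not]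

lemma algebraMap_residueField_surjective :
    Function.Surjective (algebraMap k (ResidueField (MvPowerSeries σ k))) := by
  intro x
  obtain ⟨r, rfl⟩ := residue_surjective x
  refine ⟨constantCoeff r, ?_⟩
  rw [IsScalarTower.algebraMap_apply k (MvPowerSeries σ k), ResidueField.algebraMap_eq]
  refine Ideal.Quotient.eq.2 (mem_maximalIdeal_iff_constantCoeff_eq_zero.2 ?_)
  simp [algebraMap_apply]

lemma maximalIdeal_eq_span_X_pair :
    maximalIdeal (MvPowerSeries (Fin 2) k) = Ideal.span {X 0, X 1} := by
  refine le_antisymm (fun φ hφ => mem_span_X_pair_of_constantCoeff_eq_zero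
    (mem_maximalIdeal_iff_constantCoeff_eq_zero.1 hφ)) ?_
  simp [Ideal.span_le, Set.insert_subset_iff, mem_maximalIdeal_iff_constantCoeff_eq_zero,
    -mem_maximalIdeal]

end MvPowerSeries

/-- If an ideal `I` of `R = ℂ⟦x,y⟧` contains an element `g` of order one
(`g ∈ m`, `g ∉ m²`) and `dim_ℂ(R/I) = 3`, then there is a regular system of
parameters `u, v` with `I = ⟨u, v³⟩`. -/
theorem stmt7 (I : Ideal R2) (g : R2) (hgI : g ∈ I)
    (hgm : g ∈ mIdeal) (hgm2 : g ∉ mIdeal ^ 2)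
    (hdim : Module.rank ℂ (R2 ⧸ I) = 3) :
    ∃ u v : R2, Ideal.span {u, v} = mIdeal ∧ I = Ideal.span {u, v ^ 3} := by
  have hm : Ideal.span {Xv, Yv} = maximalIdeal R2 :=
    MvPowerSeries.maximalIdeal_eq_span_X_pair.symm
  rw [mIdeal, hm] at hgm hgm2 ⊢
  obtain ⟨v, hv⟩ := exists_span_pair_eq_maximalIdeal hm hgm hgm2
  exact ⟨g, v, hv, eq_span_pair_pow_of_rank_quotient_eq
    MvPowerSeries.algebraMap_residueField_surjective hv hgI (n := 3) (by exact_mod_cast hdim)⟩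
end

section
/- Let R = ℂ⟦x,y⟧ with maximal ideal m = ⟨x,y⟩, and let u ∈ R be a unit (i.e. u(0,0) ≠ 0). Then there exist a, b ∈ R with ⟨a,b⟩ = m such that ⟨x², xy + y²·u⟩ = ⟨a², b²⟩. In particular, for u = 1 one has ⟨x², xy + y²⟩ = ⟨x², (x+2y)²⟩. -/
namespace Ideal

theorem span_pair_mul_left_unit {A : Type*} [CommSemiring A] {a : A} (ha : IsUnit a) (x y : A) :
    span {x, a * y} = span {x, y} := by
  rw [span_insert, span_singleton_mul_left_unit ha, ← span_insert]

theorem span_pair_self_add_two_mul_mul_unit {A : Type*} [CommRing A] {v : A}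
    (h2 : IsUnit (2 : A)) (hv : IsUnit v) (x y : A) :
    span {x, x + 2 * y * v} = span {x, y} := by
  rw [show x + 2 * y * v = x + (2 * v) * y by ring, span_pair_left_add,
    span_pair_mul_left_unit (h2.mul hv)]

theorem span_sq_add_two_mul_mul_unit_sq {A : Type*} [CommRing A] {v : A}
    (h2 : IsUnit (2 : A)) (hv : IsUnit v) (x y : A) :
    span {x ^ 2, (x + 2 * y * v) ^ 2} = span {x ^ 2, x * y + y ^ 2 * v} := by
  rw [show (x + 2 * y * v) ^ 2 = (2 * 2 * v) * (x * y + y ^ 2 * v) + x ^ 2 * 1 by ring,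
    span_pair_add_left_mul, span_pair_mul_left_unit ((h2.mul h2).mul hv)]

end Ideal

/-- Let `u ∈ R = ℂ⟦x,y⟧` be a unit, i.e. `u(0,0) ≠ 0`. Then there is a regular
system of parameters `a, b` with `⟨x², xy + y²u⟩ = ⟨a², b²⟩`. In particular,
for `u = 1` one has `⟨x², xy + y²⟩ = ⟨x², (x + 2y)²⟩`. -/
theorem stmt8 (u : R2) (hu : MvPowerSeries.constantCoeff u ≠ 0) :
    (∃ a b : R2, Ideal.span {a, b} = mIdeal ∧
        Ideal.span {Xv ^ 2, Xv * Yv + Yv ^ 2 * u} = Ideal.span {a ^ 2, b ^ 2}) ∧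
    Ideal.span {Xv ^ 2, Xv * Yv + Yv ^ 2} =
      Ideal.span {Xv ^ 2, (Xv + 2 * Yv) ^ 2} := by
  have h2 : IsUnit (2 : R2) :=
    MvPowerSeries.isUnit_iff_constantCoeff.mpr (by rw [map_ofNat]; norm_num)
  have hu' : IsUnit u := MvPowerSeries.isUnit_iff_constantCoeff.mpr hu.isUnit
  refine ⟨⟨Xv, Xv + 2 * Yv * u, ?_, ?_⟩, ?_⟩
  · exact Ideal.span_pair_self_add_two_mul_mul_unit h2 hu' Xv Yv
  · exact (Ideal.span_sq_add_two_mul_mul_unit_sq h2 hu' Xv Yv).symm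
  · simpa using (Ideal.span_sq_add_two_mul_mul_unit_sq h2 isUnit_one Xv Yv).symm
end

section
/- Every nonzero homogeneous polynomial c ∈ ℂ[x,y] of degree 3 (a binary cubic form over ℂ) can be brought, by an invertible linear change of the variables x, y and multiplication by a nonzero complex scalar, into exactly one of the three normal forms x³ − y³, x²y, x³. That is, there exist an invertible 2×2 complex matrix A and λ ∈ ℂ \ {0} such that λ · c(a₁₁x + a₁₂y, a₂₁x + a₂₂y) ∈ {x³ − y³, x²y, x³}. -/
/-!
A binary form over an algebraically closed field is a product of linear forms: dehomogenize,
split the resulting polynomial into linear factors, and homogenize back. Invertible linear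
substitutions act transitively on pairs of independent linear forms. So if the three factors of
a cubic are proportional, one of them can be sent to `x` and the cubic becomes a multiple of
`x³`; if exactly two are proportional, send one of those to `x` and the third to `y`, giving a
multiple of `x²y`; and if they are pairwise independent, `ℓ₃ = s ℓ₁ + t ℓ₂` with `s, t ≠ 0` and
`ℓ₁, ℓ₂` can be sent to multiples of `x - y` and `x - ωy` for a primitive cube root of unity `ω`
so that `ℓ₃` goes to a multiple of `x - ω²y`, the product of the three being `x³ - y³`.
-/

open MvPolynomial

noncomputable section

namespace BinaryForm

open Matrix

variable {K : Type*} [Field K]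

def linearForm (v : Fin 2 → K) : MvPolynomial (Fin 2) K := v 0 • X 0 + v 1 • X 1

def linearSubst (A : Matrix (Fin 2) (Fin 2) K) :
    MvPolynomial (Fin 2) K →ₐ[K] MvPolynomial (Fin 2) K :=
  aeval fun i => linearForm (A i)

lemma linearForm_vecCons (x y : K) : linearForm ![x, y] = x • X 0 + y • X 1 := rfl

lemma linearForm_smul (k : K) (v : Fin 2 → K) : linearForm (k • v) = k • linearForm v := by
  simp only [linearForm, Pi.smul_apply, smul_eq_mul, smul_add, smul_smul]

lemma linearSubst_linearForm (A : Matrix (Fin 2) (Fin 2) K) (v : Fin 2 → K) :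
    linearSubst A (linearForm v) = linearForm (v ᵥ* A) := by
  simp only [linearSubst, linearForm, map_add, map_smul, aeval_X, vecMul, dotProduct,
    Fin.sum_univ_two, add_smul, smul_add, smul_smul]
  abel

lemma linearSubst_C_mul_linearForm_mul (A : Matrix (Fin 2) (Fin 2) K) (a : K)
    (u v w : Fin 2 → K) :
    linearSubst A (C a * (linearForm u * linearForm v * linearForm w)) =
      C a * (linearForm (u ᵥ* A) * linearForm (v ᵥ* A) * linearForm (w ᵥ* A)) := by
  simp only [map_mul, linearSubst_linearForm, algHom_C, algebraMap_eq]

lemma det_of_vecCons (u v : Fin 2 → K) : (of ![u, v]).det = u 0 * v 1 - u 1 * v 0 := by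
  simp [det_fin_two]

lemma det_of_vecCons_swap (u v : Fin 2 → K) : (of ![v, u]).det = -(of ![u, v]).det := by
  simp only [det_of_vecCons]
  ring

lemma exists_vecMul_eq_of_det_ne_zero {u v u' v' : Fin 2 → K}
    (h : (of ![u, v]).det ≠ 0) (h' : (of ![u', v']).det ≠ 0) :
    ∃ A : Matrix (Fin 2) (Fin 2) K, IsUnit A.det ∧ u ᵥ* A = u' ∧ v ᵥ* A = v' := by
  set M := of ![u, v]
  have hM : M * (M⁻¹ * of ![u', v']) = of ![u', v'] :=
    mul_nonsing_inv_cancel_left _ _ (isUnit_iff_ne_zero.mpr h)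
  refine ⟨M⁻¹ * of ![u', v'], ?_, congrFun hM 0, congrFun hM 1⟩
  rw [det_mul]
  exact (M.isUnit_nonsing_inv_det (isUnit_iff_ne_zero.mpr h)).mul (isUnit_iff_ne_zero.mpr h')

lemma exists_det_ne_zero {u : Fin 2 → K} (hu : u ≠ 0) :
    ∃ u' : Fin 2 → K, (of ![u, u']).det ≠ 0 := by
  by_cases hu0 : u 0 = 0
  · have hu1 : u 1 ≠ 0 := fun hu1 => hu (by ext i; fin_cases i <;> simp [hu0, hu1])
    exact ⟨![1, 0], by simpa [det_of_vecCons] using hu1⟩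
  · exact ⟨![0, 1], by simpa [det_of_vecCons] using hu0⟩

lemma exists_eq_smul_of_det_eq_zero {u v : Fin 2 → K} (hu : u ≠ 0) (h : (of ![u, v]).det = 0) :
    ∃ k : K, v = k • u := by
  rw [det_of_vecCons] at h
  by_cases hu0 : u 0 = 0
  · have hu1 : u 1 ≠ 0 := fun hu1 => hu (by ext i; fin_cases i <;> simp [hu0, hu1])
    refine ⟨v 1 / u 1, ?_⟩
    ext i; fin_cases i
    · simpa [hu0, hu1] using h
    · simp [hu1]
  · refine ⟨v 0 / u 0, ?_⟩
    ext i; fin_cases i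
    · simp [hu0]
    · simp only [Pi.smul_apply, smul_eq_mul, Fin.mk_one]
      field_simp
      linear_combination h

lemma eq_smul_add_smul_of_det_ne_zero {u v : Fin 2 → K} (h : (of ![u, v]).det ≠ 0)
    (w : Fin 2 → K) :
    w = ((of ![w, v]).det / (of ![u, v]).det) • u +
      ((of ![u, w]).det / (of ![u, v]).det) • v := by
  rw [div_eq_inv_mul, div_eq_inv_mul, mul_smul, mul_smul, ← smul_add, eq_inv_smul_iff₀ h]
  ext i; fin_cases i <;>
  · simp only [det_of_vecCons, Pi.add_apply, Pi.smul_apply, smul_eq_mul, Fin.zero_eta,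
      Fin.mk_one]
    ring

lemma natDegree_aeval_X_one_le {c : MvPolynomial (Fin 2) K} {n : ℕ} (hc : c.IsHomogeneous n) :
    (aeval ![Polynomial.X (R := K), 1] c).natDegree ≤ n := by
  rw [c.as_sum, map_sum]
  refine Polynomial.natDegree_sum_le_of_forall_le _ _ fun d hd => ?_
  have hdn : d 0 + d 1 = n := by
    simpa [Finsupp.weight_apply, Finsupp.sum_fintype, Fin.sum_univ_two] using
      hc (mem_support_iff.mp hd)
  rw [aeval_monomial, Finsupp.prod_fintype _ _ (by simp), Fin.prod_univ_two]
  simp only [cons_val_zero, cons_val_one, one_pow, mul_one]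
  exact (Polynomial.natDegree_C_mul_le _ _).trans
    ((Polynomial.natDegree_X_pow_le _).trans (by omega))

lemma homogenize_prod_X_sub_C (s : Multiset K) :
    ((s.map fun r => Polynomial.X - Polynomial.C r).prod).homogenize (Multiset.card s) =
      (s.map fun r => linearForm ![1, -r]).prod := by
  induction s using Multiset.induction_on with
  | empty => simp
  | cons r s ih =>
    rw [Multiset.map_cons, Multiset.prod_cons, Multiset.card_cons, add_comm,
      Polynomial.homogenize_mul _ _ (Polynomial.natDegree_X_sub_C_le r)
        (Polynomial.natDegree_multiset_prod_X_sub_C_eq_card s).le, ih, Multiset.map_cons,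
      Multiset.prod_cons, Polynomial.homogenize_sub, Polynomial.homogenize_X one_ne_zero,
      Polynomial.homogenize_C, linearForm_vecCons]
    simp [smul_eq_C_mul, neg_smul, sub_eq_add_neg]

theorem _root_.MvPolynomial.IsHomogeneous.exists_eq_C_mul_prod_linearForm [IsAlgClosed K]
    {c : MvPolynomial (Fin 2) K} {n : ℕ} (hc : c.IsHomogeneous n) :
    ∃ (a : K) (L : Multiset (Fin 2 → K)), Multiset.card L = n ∧ (∀ v ∈ L, v ≠ 0) ∧
      c = C a * (L.map linearForm).prod := by
  set f := aeval ![Polynomial.X (R := K), 1] c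
  have hdeg : f.natDegree ≤ n := natDegree_aeval_X_one_le hc
  have hroots : Multiset.card f.roots = f.natDegree := IsAlgClosed.card_roots_eq_natDegree
  refine ⟨f.leadingCoeff,
    f.roots.map (fun r => ![1, -r]) + Multiset.replicate (n - f.natDegree) ![0, 1], ?_, ?_, ?_⟩
  · simp only [Multiset.card_add, Multiset.card_map, Multiset.card_replicate, hroots]
    omega
  · simp only [Multiset.mem_add, Multiset.mem_map, Multiset.mem_replicate]
    rintro v (⟨r, -, rfl⟩ | ⟨-, rfl⟩) hv
    · simpa using congrFun hv 0
    · simpa using congrFun hv 1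
  · calc c = f.homogenize n := (Polynomial.homogenize_eq_of_isHomogeneous hc rfl).symm
      _ = (Polynomial.C f.leadingCoeff * (f.roots.map fun r => Polynomial.X - Polynomial.C r).prod
            * 1).homogenize (Multiset.card f.roots + (n - f.natDegree)) := by
          rw [mul_one, Polynomial.C_leadingCoeff_mul_prod_multiset_X_sub_C hroots, hroots,
            Nat.add_sub_cancel' hdeg]
      _ = _ := by
          rw [Polynomial.homogenize_mul _ _ ?_ (by simp), Polynomial.homogenize_C_mul,
            homogenize_prod_X_sub_C]
          · simp [Multiset.map_add, Multiset.prod_add, Multiset.map_map, Function.comp_def,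
              linearForm_vecCons, mul_assoc]
          · exact (Polynomial.natDegree_C_mul_le _ _).trans
              (Polynomial.natDegree_multiset_prod_X_sub_C_eq_card _).le

def cubicNormalForms : Set (MvPolynomial (Fin 2) K) := {X 0 ^ 3 - X 1 ^ 3, X 0 ^ 2 * X 1, X 0 ^ 3}

def HasCubicNormalForm (c : MvPolynomial (Fin 2) K) : Prop :=
  ∃ (A : Matrix (Fin 2) (Fin 2) K) (lam : K), IsUnit A.det ∧ lam ≠ 0 ∧
    lam • linearSubst A c ∈ cubicNormalForms

lemma hasCubicNormalForm_of_linearSubst_eq_smul {c f : MvPolynomial (Fin 2) K}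
    {A : Matrix (Fin 2) (Fin 2) K} {μ : K} (hA : IsUnit A.det) (hμ : μ ≠ 0)
    (hf : f ∈ cubicNormalForms) (h : linearSubst A c = μ • f) : HasCubicNormalForm c :=
  ⟨A, μ⁻¹, hA, inv_ne_zero hμ, by rwa [h, smul_smul, inv_mul_cancel₀ hμ, one_smul]⟩

lemma X_pow_three_sub_X_pow_three_eq_mul {ω : K} (hω : IsPrimitiveRoot ω 3) :
    (X 0 ^ 3 - X 1 ^ 3 : MvPolynomial (Fin 2) K) =
      linearForm ![1, -1] * linearForm ![1, -ω] * linearForm ![1, -ω ^ 2] := by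
  have h1 : (1 + C ω + C ω ^ 2 : MvPolynomial (Fin 2) K) = 0 := by
    simpa [Finset.sum_range_succ] using congrArg C (hω.geom_sum_eq_zero (by norm_num))
  have h3 : (C ω ^ 3 : MvPolynomial (Fin 2) K) = 1 := by
    rw [← map_pow, hω.pow_eq_one, map_one]
  simp only [linearForm_vecCons, one_smul, smul_eq_C_mul, map_neg, map_one, map_pow]
  linear_combination (X 0 ^ 2 * X 1 - C ω * X 0 * X 1 ^ 2) * h1 + X 1 ^ 3 * h3

lemma hasCubicNormalForm_of_triple_root {a k m : K} (ha : a ≠ 0) (hk : k ≠ 0) (hm : m ≠ 0)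
    {u : Fin 2 → K} (hu : u ≠ 0) :
    HasCubicNormalForm (C a * (linearForm u * linearForm (k • u) * linearForm (m • u))) := by
  obtain ⟨u', hu'⟩ := exists_det_ne_zero hu
  obtain ⟨A, hA, hAu, -⟩ := exists_vecMul_eq_of_det_ne_zero hu'
    (u' := ![1, 0]) (v' := ![0, 1]) (by simp [det_of_vecCons])
  refine hasCubicNormalForm_of_linearSubst_eq_smul (μ := a * k * m) (f := X 0 ^ 3) hA
    (by simp [ha, hk, hm]) (by simp [cubicNormalForms]) ?_
  rw [linearSubst_C_mul_linearForm_mul]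
  simp only [smul_vecMul, hAu, linearForm_smul, linearForm_vecCons, one_smul, zero_smul,
    add_zero, smul_eq_C_mul, map_mul]
  ring

lemma hasCubicNormalForm_of_double_root {a k : K} (ha : a ≠ 0) (hk : k ≠ 0) {u w : Fin 2 → K}
    (huw : (of ![u, w]).det ≠ 0) :
    HasCubicNormalForm (C a * (linearForm u * linearForm (k • u) * linearForm w)) := by
  obtain ⟨A, hA, hAu, hAw⟩ := exists_vecMul_eq_of_det_ne_zero huw
    (u' := ![1, 0]) (v' := ![0, 1]) (by simp [det_of_vecCons])
  refine hasCubicNormalForm_of_linearSubst_eq_smul (μ := a * k) (f := X 0 ^ 2 * X 1) hA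
    (by simp [ha, hk]) (by simp [cubicNormalForms]) ?_
  rw [linearSubst_C_mul_linearForm_mul]
  simp only [smul_vecMul, hAu, hAw, linearForm_smul, linearForm_vecCons, one_smul, zero_smul,
    add_zero, zero_add, smul_eq_C_mul, map_mul]
  ring

lemma hasCubicNormalForm_of_distinct_roots {ω : K} (hω : IsPrimitiveRoot ω 3) {a s t : K}
    (ha : a ≠ 0) (hs : s ≠ 0) (ht : t ≠ 0) {u v : Fin 2 → K}
    (huv : (of ![u, v]).det ≠ 0) :
    HasCubicNormalForm (C a * (linearForm u * linearForm v * linearForm (s • u + t • v))) := by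
  have hω0 : ω ≠ 0 := hω.ne_zero (by norm_num)
  have h1 : 1 + ω + ω ^ 2 = 0 := by
    simpa [Finset.sum_range_succ, add_assoc] using hω.geom_sum_eq_zero (by norm_num)
  have hdet : (of ![s⁻¹ • ![1, -1], (ω * t⁻¹) • ![1, -ω]]).det =
      s⁻¹ * (ω * t⁻¹) * (1 - ω) := by
    simp only [det_of_vecCons, Pi.smul_apply, smul_eq_mul, cons_val_zero, cons_val_one,
      cons_val_fin_one]
    ring
  obtain ⟨A, hA, hAu, hAv⟩ := exists_vecMul_eq_of_det_ne_zero huv (by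
    rw [hdet]
    exact mul_ne_zero (by simp [hs, ht, hω0]) (sub_ne_zero.mpr (hω.ne_one (by norm_num)).symm))
  have hAw : (s • u + t • v) ᵥ* A = (-ω ^ 2) • ![1, -ω ^ 2] := by
    rw [add_vecMul, smul_vecMul, smul_vecMul, hAu, hAv, smul_smul, smul_smul, mul_inv_cancel₀ hs,
      mul_left_comm, mul_inv_cancel₀ ht, mul_one, one_smul]
    ext i; fin_cases i
    · simp only [smul_cons, smul_eq_mul, mul_one, mul_neg, smul_empty, Fin.zero_eta,
        Pi.add_apply, cons_val_zero]
      linear_combination h1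
    · simp only [smul_cons, smul_eq_mul, mul_one, mul_neg, smul_empty, Fin.mk_one,
        Pi.add_apply, cons_val_one, cons_val_fin_one, neg_mul, neg_neg]
      linear_combination -h1 - ω * hω.pow_eq_one
  refine hasCubicNormalForm_of_linearSubst_eq_smul (μ := a * s⁻¹ * (ω * t⁻¹) * -ω ^ 2)
    (f := X 0 ^ 3 - X 1 ^ 3) hA (by simp [ha, hs, ht, hω0]) (by simp [cubicNormalForms]) ?_
  rw [linearSubst_C_mul_linearForm_mul, hAu, hAv, hAw, X_pow_three_sub_X_pow_three_eq_mul hω]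
  simp only [linearForm_smul, smul_eq_C_mul, map_mul]
  ring

lemma hasCubicNormalForm_C_mul_linearForm_mul {ω : K} (hω : IsPrimitiveRoot ω 3) {a : K}
    (ha : a ≠ 0) {u v w : Fin 2 → K} (hu : u ≠ 0) (hv : v ≠ 0) (hw : w ≠ 0) :
    HasCubicNormalForm (C a * (linearForm u * linearForm v * linearForm w)) := by
  have ne_zero_of_smul {k : K} {x : Fin 2 → K} (h : k • x ≠ 0) : k ≠ 0 := by
    rintro rfl
    exact h (zero_smul K x)
  by_cases huv : (of ![u, v]).det = 0
  · obtain ⟨k, rfl⟩ := exists_eq_smul_of_det_eq_zero hu huv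
    by_cases huw : (of ![u, w]).det = 0
    · obtain ⟨m, rfl⟩ := exists_eq_smul_of_det_eq_zero hu huw
      exact hasCubicNormalForm_of_triple_root ha (ne_zero_of_smul hv) (ne_zero_of_smul hw) hu
    · exact hasCubicNormalForm_of_double_root ha (ne_zero_of_smul hv) huw
  by_cases huw : (of ![u, w]).det = 0
  · obtain ⟨k, rfl⟩ := exists_eq_smul_of_det_eq_zero hu huw
    convert hasCubicNormalForm_of_double_root ha (ne_zero_of_smul hw) huv using 2
    ring
  by_cases hvw : (of ![v, w]).det = 0
  · obtain ⟨k, rfl⟩ := exists_eq_smul_of_det_eq_zero hv hvw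
    have hvu : (of ![v, u]).det ≠ 0 := by rwa [det_of_vecCons_swap, neg_ne_zero]
    convert hasCubicNormalForm_of_double_root ha (ne_zero_of_smul hw) hvu using 2
    ring
  have hwv : (of ![w, v]).det ≠ 0 := by rwa [det_of_vecCons_swap, neg_ne_zero]
  rw [eq_smul_add_smul_of_det_ne_zero huv w]
  exact hasCubicNormalForm_of_distinct_roots hω ha (div_ne_zero hwv huv) (div_ne_zero huw huv) huv

end BinaryForm

end

open BinaryForm in
/-- **Normal forms of binary cubics over ℂ.** Every nonzero homogeneous
polynomial `c ∈ ℂ[x,y]` of degree 3 can be brought, by an invertible linear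
change of the variables and multiplication by a nonzero scalar, into one of
the three normal forms `x³ - y³`, `x²y`, `x³`: there exist an invertible
matrix `A ∈ GL₂(ℂ)` and `λ ≠ 0` with
`λ • c(a₁₁x + a₁₂y, a₂₁x + a₂₂y) ∈ {x³ - y³, x²y, x³}`. -/
theorem stmt12 (c : MvPolynomial (Fin 2) ℂ) (hc : c ≠ 0)
    (hhom : c.IsHomogeneous 3) :
    ∃ (A : Matrix (Fin 2) (Fin 2) ℂ) (lam : ℂ), IsUnit A.det ∧ lam ≠ 0 ∧
      lam • (aeval (fun i : Fin 2 =>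
          A i 0 • (X 0 : MvPolynomial (Fin 2) ℂ) + A i 1 • X 1) c) ∈
        ({X 0 ^ 3 - X 1 ^ 3, X 0 ^ 2 * X 1, X 0 ^ 3} :
          Set (MvPolynomial (Fin 2) ℂ)) := by
  obtain ⟨a, L, hcard, hL, rfl⟩ := hhom.exists_eq_C_mul_prod_linearForm
  obtain ⟨u, v, w, rfl⟩ := Multiset.card_eq_three.mp hcard
  have ha : a ≠ 0 := by
    rintro rfl
    simp at hc
  simp only [Multiset.insert_eq_cons, Multiset.mem_cons, Multiset.mem_singleton,
    forall_eq_or_imp, forall_eq] at hL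
  simp only [Multiset.insert_eq_cons, Multiset.map_cons, Multiset.map_singleton,
    Multiset.prod_cons, Multiset.prod_singleton]
  rw [← mul_assoc (linearForm u)]
  exact hasCubicNormalForm_C_mul_linearForm_mul (Complex.isPrimitiveRoot_exp 3 (by norm_num)) ha
    hL.1 hL.2.1 hL.2.2
end

section
/- Let R = ℂ⟦x,y⟧ with maximal ideal m = ⟨x,y⟩. For every c ∈ m³, the ideal I = ⟨x², xy + c⟩ satisfies dim_ℂ(R/I) ≥ 5 (possibly infinite); in particular dim_ℂ(R/I) ≠ 4. (Equivalently: two power series of order two whose quadratic parts share a common linear factor cannot generate an ideal of colength 4.) -/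
/-!
Let `γ` be the `y³`-coefficient of `c`. The linear forms reading off the coefficients of
`1, x, y, y²` and `y³ - γ·xy` vanish on `I = ⟨x², xy + c⟩`: a multiple of `x²` has none of these
monomials, and for `v (xy + c)` the only contributions are `v₀` at `xy` (from `v xy`) and `v₀ γ`
at `y³` (from `v c`, as `c` has order `≥ 3`), which cancel. These forms are dual to
`1, x, y, y², y³`, so the classes of those five monomials are linearly independent in `R ⧸ I`.
-/

namespace MvPowerSeries

variable {σ R : Type*} [CommSemiring R]

def orderIdeal (n : ℕ∞) : Ideal (MvPowerSeries σ R) where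
  carrier := {f | n ≤ f.order}
  zero_mem' := by simp
  add_mem' {f g} hf hg := (le_min hf hg).trans min_order_le_add
  smul_mem' f g hg := hg.trans <| le_add_self.trans le_order_mul

theorem mem_orderIdeal {n : ℕ∞} {f : MvPowerSeries σ R} : f ∈ orderIdeal n ↔ n ≤ f.order :=
  Iff.rfl

theorem orderIdeal_mul_le (a b : ℕ∞) :
    orderIdeal a * orderIdeal b ≤ (orderIdeal (a + b) : Ideal (MvPowerSeries σ R)) :=
  Ideal.mul_le.mpr fun _ hf _ hg => (add_le_add hf hg).trans le_order_mul

theorem pow_le_orderIdeal {I : Ideal (MvPowerSeries σ R)} (hI : I ≤ orderIdeal 1) :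
    ∀ n : ℕ, I ^ n ≤ orderIdeal n
  | 0 => by simp [orderIdeal]
  | n + 1 => by
    rw [pow_succ, Nat.cast_succ]
    exact (Ideal.mul_mono (pow_le_orderIdeal hI n) hI).trans (orderIdeal_mul_le _ _)

theorem coeff_mul_of_degree_le_order {f g : MvPowerSeries σ R} {d : σ →₀ ℕ}
    (hd : (d.degree : ℕ∞) ≤ g.order) : coeff d (f * g) = constantCoeff f * coeff d g := by
  classical
  rw [coeff_mul, Finset.sum_eq_single_of_mem (0, d) (by simp), coeff_zero_eq_constantCoeff_apply]
  rintro ⟨p, q⟩ hpq hne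
  rw [Finset.HasAntidiagonal.mem_antidiagonal] at hpq
  have hp : p ≠ 0 := by rintro rfl; simp_all
  have hq : (q.degree : ℕ∞) < g.order := by
    refine lt_of_lt_of_le ?_ hd
    rw [← hpq, map_add, Nat.cast_lt]
    exact Nat.lt_add_of_pos_left <| Nat.pos_of_ne_zero <| (Finsupp.degree_eq_zero_iff p).not.mpr hp
  rw [coeff_of_lt_order hq, mul_zero]

end MvPowerSeries

theorem Ideal.linearIndependent_mk_of_comp {K A V ι : Type*} [CommRing K] [CommRing A]
    [Algebra K A] [AddCommGroup V] [Module K V] [Fintype ι] {I : Ideal A} (L : A →ₗ[K] V)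
    (hL : ∀ w ∈ I, L w = 0) {v : ι → A} (hv : LinearIndependent K (L ∘ v)) :
    LinearIndependent K (Ideal.Quotient.mkₐ K I ∘ v) := by
  rw [Fintype.linearIndependent_iff] at hv ⊢
  intro g hg
  refine hv g ?_
  have hmem : ∑ i, g i • v i ∈ I := by
    rw [← Ideal.Quotient.eq_zero_iff_mem, ← Ideal.Quotient.mkₐ_eq_mk K]
    simpa [map_sum] using hg
  simpa [map_sum] using hL _ hmem

open MvPowerSeries

noncomputable def xyExp (a b : ℕ) : Fin 2 →₀ ℕ := Finsupp.single 0 a + Finsupp.single 1 b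

@[simp] theorem xyExp_le_xyExp {a b a' b' : ℕ} : xyExp a b ≤ xyExp a' b' ↔ a ≤ a' ∧ b ≤ b' := by
  simp [xyExp, Finsupp.le_def, Fin.forall_fin_two]

@[simp] theorem xyExp_inj {a b a' b' : ℕ} : xyExp a b = xyExp a' b' ↔ a = a' ∧ b = b' := by
  simp [xyExp, Finsupp.ext_iff, Fin.forall_fin_two]

@[simp] theorem degree_xyExp (a b : ℕ) : (xyExp a b).degree = a + b := by
  simp [xyExp]

theorem Xv_pow_mul_Yv_pow_s13 (a b : ℕ) : Xv ^ a * Yv ^ b = monomial (xyExp a b) 1 := by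
  rw [Xv, Yv, X_pow_eq, X_pow_eq, monomial_mul_monomial, mul_one, xyExp]

theorem mIdeal_le_orderIdeal_one : mIdeal ≤ orderIdeal 1 := by
  rw [mIdeal, Ideal.span_le, Set.insert_subset_iff, Set.singleton_subset_iff]
  refine ⟨?_, ?_⟩ <;> simp [Xv, Yv, mem_orderIdeal, X, order_monomial_of_ne_zero]

noncomputable def colengthFunctional (γ : ℂ) : R2 →ₗ[ℂ] Fin 5 → ℂ :=
  LinearMap.pi ![coeff (xyExp 0 0), coeff (xyExp 1 0), coeff (xyExp 0 1), coeff (xyExp 0 2),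
    coeff (xyExp 0 3) - γ • coeff (xyExp 1 1)]

theorem colengthFunctional_eq_zero_of_mem {c w : R2} (hc : 3 ≤ c.order)
    (hw : w ∈ Ideal.span {Xv ^ 2, Xv * Yv + c}) :
    colengthFunctional (coeff (xyExp 0 3) c) w = 0 := by
  obtain ⟨u, v, rfl⟩ := Ideal.mem_span_pair.mp hw
  have hcoeff {d : Fin 2 →₀ ℕ} (hd : d.degree ≤ 3) :
      coeff d (v * c) = constantCoeff v * coeff d c :=
    coeff_mul_of_degree_le_order (le_trans (by exact_mod_cast hd) hc)
  have hlow {d : Fin 2 →₀ ℕ} (hd : d.degree < 3) : coeff d c = 0 :=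
    coeff_of_lt_order (lt_of_lt_of_le (by exact_mod_cast hd) hc)
  rw [show Xv ^ 2 = Xv ^ 2 * Yv ^ 0 by simp, show Xv * Yv = Xv ^ 1 * Yv ^ 1 by simp,
    Xv_pow_mul_Yv_pow_s13, Xv_pow_mul_Yv_pow_s13]
  ext j
  fin_cases j <;>
    simp [colengthFunctional, mul_add, coeff_mul_monomial, coeff_zero_eq_constantCoeff_apply,
      hcoeff, hlow, mul_comm (constantCoeff v)]

theorem linearIndependent_colengthFunctional_comp (γ : ℂ) :
    LinearIndependent ℂ (colengthFunctional γ ∘ fun i : Fin 5 =>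
      monomial (![xyExp 0 0, xyExp 1 0, xyExp 0 1, xyExp 0 2, xyExp 0 3] i) (1 : ℂ)) := by
  convert (Pi.basisFun ℂ (Fin 5)).linearIndependent
  ext i j
  fin_cases i <;> fin_cases j <;> simp [colengthFunctional, coeff_monomial]

/-- For every `c ∈ m³`, the ideal `I = ⟨x², xy + c⟩` of `R = ℂ⟦x,y⟧`
satisfies `dim_ℂ(R/I) ≥ 5` (possibly infinite); in particular
`dim_ℂ(R/I) ≠ 4`. -/
theorem stmt13 (c : R2) (hc : c ∈ mIdeal ^ 3) :
    (5 : Cardinal) ≤ Module.rank ℂ (R2 ⧸ Ideal.span {Xv ^ 2, Xv * Yv + c}) ∧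
    Module.rank ℂ (R2 ⧸ Ideal.span {Xv ^ 2, Xv * Yv + c}) ≠ 4 := by
  have hc3 : 3 ≤ c.order := pow_le_orderIdeal mIdeal_le_orderIdeal_one 3 hc
  have h5 : (5 : Cardinal) ≤ Module.rank ℂ (R2 ⧸ Ideal.span {Xv ^ 2, Xv * Yv + c}) := by
    simpa using (Ideal.linearIndependent_mk_of_comp _ (fun w hw =>
      colengthFunctional_eq_zero_of_mem hc3 hw)
      (linearIndependent_colengthFunctional_comp _)).cardinal_le_rank
  refine ⟨h5, fun h4 => ?_⟩
  rw [h4] at h5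
  exact absurd h5 (by norm_num)
end
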